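/- arXiv:1203.2208 — 6 statements merged into one kernel-verified Lean document; each statement's English description precedes it below -/
import Mathlib

section
/- For all real numbers 0 < p < ∞ and 0 < q < ∞ and integers 0 ≤ l ≤ k with l < 1/q − 1/p, there exists a constant C = C(k, p, q) > 0 such that for every integer n ≥ k and every polynomial P ∈ Δ_n^{(k)}, one has ‖P^{(l)}‖_{L_q[−1,1]} ≤ C · ‖P‖_{L_p[−1,1]}. -/
/-!
For `l = 0` this is Hölder's inequality. For `l ≥ 1` we first prove the pointwise bound
`P⁽ⁱ⁾(x) (1 - x)^(i + 1/p) ≤ c ‖P‖_p` for `i < k`: for `i = 0` because `P ≥ 0` is increasing, so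
`P(x)^p (1 - x) ≤ ∫_x^1 P^p`, and then by induction, since `P⁽ⁱ⁺¹⁾` is increasing and the mean value
theorem on `[x, (x + 1)/2]` gives `P⁽ⁱ⁺¹⁾(x) (1 - x)/2 ≤ P⁽ⁱ⁾((x + 1)/2)`.
Integrating by parts against the weight `(1 - x)^α` with `l - 1 + 1/p < α < 1/q - 1` and using the
bound for `i = l - 1` controls `∫ P⁽ˡ⁾(x) (1 - x)^α dx` by `‖P‖_p`. Finally `q < 1`, and Hölder's
inequality with exponents `1/q` and `1/(1 - q)` turns this weighted `L¹` bound into an `L_q` bound,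
since `(1 - x)^(-αq/(1 - q))` is integrable.
-/

open Polynomial MeasureTheory

/-- The `L_q` quasinorm of `f` on `[a,b]` for `0 < q < ∞`. -/
noncomputable def LqNorm (f : ℝ → ℝ) (q a b : ℝ) : ℝ :=
  (∫ x in a..b, |f x| ^ q) ^ (1 / q)

/-- The sup norm of `f` on `[a,b]`. -/
noncomputable def LinfNorm (f : ℝ → ℝ) (a b : ℝ) : ℝ :=
  sSup ((fun x => |f x|) '' Set.Icc a b)

/-- The `L_q` norm on `[a,b]` for `0 < q ≤ ∞`, `q : ℝ≥0∞`. -/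
noncomputable def Lnorm (f : ℝ → ℝ) (q : ENNReal) (a b : ℝ) : ℝ :=
  if q = ⊤ then LinfNorm f a b else LqNorm f q.toReal a b

/-- `P ∈ Δ_n^(k)`: a real polynomial of degree at most `n` all of whose derivatives of
order `0 ≤ m ≤ k` are nonnegative on `[-1,1]`. -/
def AbsMono (P : Polynomial ℝ) (n k : ℕ) : Prop :=
  P.natDegree ≤ n ∧
    ∀ m ≤ k, ∀ x ∈ Set.Icc (-1 : ℝ) 1, 0 ≤ (derivative^[m] P).eval x

open Set Real

theorem MeasureTheory.integral_rpow_mul_rpow_le {α : Type*} [MeasurableSpace α] {μ : Measure α}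
    {f g : α → ℝ}
    (hf0 : 0 ≤ᵐ[μ] f) (hg0 : 0 ≤ᵐ[μ] g) (hf : Integrable f μ) (hg : Integrable g μ)
    {p q : ℝ} (hp : 0 ≤ p) (hq : 0 ≤ q) (hpq : p + q = 1) :
    ∫ a, f a ^ p * g a ^ q ∂μ ≤ (∫ a, f a ∂μ) ^ p * (∫ a, g a ∂μ) ^ q := by
  have hfg0 : 0 ≤ᵐ[μ] fun a => f a ^ p * g a ^ q := by
    filter_upwards [hf0, hg0] with a (ha : 0 ≤ f a) (hb : 0 ≤ g a)
    positivity
  have hofReal : (fun a => ENNReal.ofReal (f a ^ p * g a ^ q)) =ᵐ[μ]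
      fun a => ENNReal.ofReal (f a) ^ p * ENNReal.ofReal (g a) ^ q := by
    filter_upwards [hf0, hg0] with a (ha : 0 ≤ f a) (hb : 0 ≤ g a)
    rw [ENNReal.ofReal_mul (by positivity), ENNReal.ofReal_rpow_of_nonneg ha hp,
      ENNReal.ofReal_rpow_of_nonneg hb hq]
  rw [integral_eq_lintegral_of_nonneg_ae hfg0
      ((hf.aemeasurable.pow_const p).mul (hg.aemeasurable.pow_const q)).aestronglyMeasurable,
    integral_eq_lintegral_of_nonneg_ae hf0 hf.1, integral_eq_lintegral_of_nonneg_ae hg0 hg.1,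
    ENNReal.toReal_rpow, ENNReal.toReal_rpow, ← ENNReal.toReal_mul, lintegral_congr_ae hofReal]
  refine ENNReal.toReal_mono ?_ (ENNReal.lintegral_mul_norm_pow_le
    hf.aemeasurable.ennreal_ofReal hg.aemeasurable.ennreal_ofReal hp hq hpq)
  exact ENNReal.mul_ne_top (ENNReal.rpow_ne_top_of_nonneg hp hf.lintegral_lt_top.ne)
    (ENNReal.rpow_ne_top_of_nonneg hq hg.lintegral_lt_top.ne)

theorem intervalIntegral.integral_rpow_mul_rpow_le {f g : ℝ → ℝ} {a b : ℝ} (hab : a ≤ b)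
    (hf0 : ∀ x ∈ Ioc a b, 0 ≤ f x) (hg0 : ∀ x ∈ Ioc a b, 0 ≤ g x)
    (hf : IntervalIntegrable f volume a b) (hg : IntervalIntegrable g volume a b)
    {p q : ℝ} (hp : 0 ≤ p) (hq : 0 ≤ q) (hpq : p + q = 1) :
    ∫ x in a..b, f x ^ p * g x ^ q ≤ (∫ x in a..b, f x) ^ p * (∫ x in a..b, g x) ^ q := by
  simp only [intervalIntegral.integral_of_le hab]
  exact MeasureTheory.integral_rpow_mul_rpow_le (ae_restrict_of_forall_mem measurableSet_Ioc hf0)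
    (ae_restrict_of_forall_mem measurableSet_Ioc hg0) hf.1 hg.1 hp hq hpq

theorem continuous_sub_rpow {b α : ℝ} (hα : 0 ≤ α) : Continuous fun x : ℝ => (b - x) ^ α :=
  (continuous_const.sub continuous_id).rpow_const fun _ => Or.inr hα

theorem intervalIntegrable_sub_rpow {a b s : ℝ} (hs : -1 < s) :
    IntervalIntegrable (fun x => (b - x) ^ s) volume a b := by
  simpa using
    ((intervalIntegral.intervalIntegrable_rpow' hs (a := 0) (b := b - a)).comp_sub_left b).symm

theorem integral_sub_rpow {a b s : ℝ} (hs : -1 < s) :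
    ∫ x in a..b, (b - x) ^ s = (b - a) ^ (s + 1) / (s + 1) := by
  rw [intervalIntegral.integral_comp_sub_left (fun u => u ^ s) b, sub_self,
    integral_rpow (Or.inl hs), zero_rpow (by linarith), sub_zero]

theorem LqNorm_le_rpow_mul_LqNorm_of_lt {f : ℝ → ℝ} (hf : Continuous f) {a b p q : ℝ}
    (hab : a ≤ b) (hq : 0 < q) (hqp : q < p) :
    LqNorm f q a b ≤ (b - a) ^ (1 / q - 1 / p) * LqNorm f p a b := by
  have hp : 0 < p := hq.trans hqp
  have hpow : ∀ x, (|f x| ^ p) ^ (q / p) * 1 ^ (1 - q / p) = |f x| ^ q := fun x => by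
    rw [one_rpow, mul_one, ← rpow_mul (abs_nonneg _), mul_div_cancel₀ q hp.ne']
  have holder := intervalIntegral.integral_rpow_mul_rpow_le hab
    (fun x _ => rpow_nonneg (abs_nonneg (f x)) p) (fun _ _ => zero_le_one)
    ((hf.abs.rpow_const fun _ => Or.inr hp.le).intervalIntegrable a b)
    intervalIntegrable_const (div_pos hq hp).le (by rw [sub_nonneg, div_le_one hp]; exact hqp.le)
    (add_sub_cancel _ _)
  simp only [hpow, intervalIntegral.integral_const, smul_eq_mul, mul_one] at holder
  have hI : 0 ≤ ∫ x in a..b, |f x| ^ p :=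
    intervalIntegral.integral_nonneg hab fun x _ => rpow_nonneg (abs_nonneg _) _
  have hba : 0 ≤ b - a := sub_nonneg.2 hab
  calc LqNorm f q a b
      ≤ ((∫ x in a..b, |f x| ^ p) ^ (q / p) * (b - a) ^ (1 - q / p)) ^ (1 / q) :=
        rpow_le_rpow (intervalIntegral.integral_nonneg hab fun x _ => by positivity) holder
          (by positivity)
    _ = (b - a) ^ (1 / q - 1 / p) * LqNorm f p a b := by
        rw [LqNorm, mul_rpow (by positivity) (by positivity), ← rpow_mul hI, ← rpow_mul hba,
          mul_comm]
        congr 2 <;> field_simp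

theorem Polynomial.monotoneOn_eval_of_derivative_nonneg {P : ℝ[X]} {s : Set ℝ} (hs : Convex ℝ s)
    (h : ∀ x ∈ s, 0 ≤ P.derivative.eval x) : MonotoneOn (fun x => P.eval x) s :=
  monotoneOn_of_deriv_nonneg hs P.continuous.continuousOn P.differentiable.differentiableOn
    fun x hx => by simpa only [Polynomial.deriv] using h x (interior_subset hx)

theorem Polynomial.derivative_eval_mul_sub_le {P : ℝ[X]} {x y : ℝ} (hxy : x ≤ y)
    (h : MonotoneOn (fun z => P.derivative.eval z) (Icc x y)) :
    P.derivative.eval x * (y - x) ≤ P.eval y - P.eval x :=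
  (convex_Icc x y).mul_sub_le_image_sub_of_le_deriv P.continuous.continuousOn
    P.differentiable.differentiableOn
    (fun z hz => by
      rw [interior_Icc] at hz
      simpa only [Polynomial.deriv] using h (left_mem_Icc.2 hxy) (Ioo_subset_Icc_self hz) hz.1.le)
    x (left_mem_Icc.2 hxy) y (right_mem_Icc.2 hxy) hxy

theorem mul_rpow_le_LqNorm_of_monotoneOn {f : ℝ → ℝ} {a b p x : ℝ} (hp : 0 < p)
    (hf : MonotoneOn f (Icc a b)) (hf0 : ∀ y ∈ Icc a b, 0 ≤ f y)
    (hfi : IntervalIntegrable (fun y => |f y| ^ p) volume a b) (hx : x ∈ Icc a b) :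
    f x * (b - x) ^ (1 / p) ≤ LqNorm f p a b := by
  have hbx : 0 ≤ b - x := sub_nonneg.2 hx.2
  have key : f x ^ p * (b - x) ≤ ∫ y in a..b, |f y| ^ p :=
    calc f x ^ p * (b - x) = ∫ _ in x..b, f x ^ p := by simp [mul_comm]
      _ ≤ ∫ y in x..b, |f y| ^ p :=
        intervalIntegral.integral_mono_on hx.2 intervalIntegrable_const
          (hfi.mono_set <| by
            rw [uIcc_of_le hx.2, uIcc_of_le (hx.1.trans hx.2)]
            exact Icc_subset_Icc_left hx.1)
          fun y hy => rpow_le_rpow (hf0 x hx)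
            ((hf hx ⟨hx.1.trans hy.1, hy.2⟩ hy.1).trans (le_abs_self _)) hp.le
      _ ≤ ∫ y in a..b, |f y| ^ p :=
        intervalIntegral.integral_mono_interval hx.1 hx.2 le_rfl
          (Filter.Eventually.of_forall fun y => rpow_nonneg (abs_nonneg _) _) hfi
  calc f x * (b - x) ^ (1 / p) = (f x ^ p * (b - x)) ^ (1 / p) := by
        rw [mul_rpow (rpow_nonneg (hf0 x hx) _) hbx, ← rpow_mul (hf0 x hx),
          mul_one_div_cancel hp.ne', rpow_one]
    _ ≤ LqNorm f p a b := rpow_le_rpow (by positivity [hf0 x hx]) key (by positivity)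

theorem iterate_derivative_eval_mul_rpow_le {P : ℝ[X]} {a b p : ℝ} (hp : 0 < p) (i : ℕ)
    (hP : ∀ m ≤ i + 1, ∀ x ∈ Icc a b, 0 ≤ (derivative^[m] P).eval x) {x : ℝ} (hx : x ∈ Icc a b) :
    (derivative^[i] P).eval x * (b - x) ^ (i + 1 / p) ≤
      2 ^ (i * (i + 1) / 2 + i / p) * LqNorm (fun y => P.eval y) p a b := by
  induction i generalizing x with
  | zero =>
    simpa using mul_rpow_le_LqNorm_of_monotoneOn hp
      (P.monotoneOn_eval_of_derivative_nonneg (convex_Icc a b) (hP 1 le_rfl))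
      (hP 0 (Nat.zero_le _))
      ((P.continuous.abs.rpow_const fun _ => Or.inr hp.le).intervalIntegrable a b) hx
  | succ i ih =>
    set u := (b - x) / 2 with hu_def
    have hu : 0 ≤ u := by linarith [hx.2]
    have hm : (x + b) / 2 ∈ Icc a b := ⟨by linarith [hx.1, hx.2], by linarith [hx.2]⟩
    have hmono : MonotoneOn (fun z => (derivative (derivative^[i] P)).eval z) (Icc a b) := by
      refine Polynomial.monotoneOn_eval_of_derivative_nonneg (convex_Icc a b) fun z hz => ?_
      simpa only [← Function.iterate_succ_apply' derivative] using hP (i + 2) le_rfl z hz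
    have halving : (derivative^[i + 1] P).eval x * u ≤ (derivative^[i] P).eval ((x + b) / 2) := by
      have hxm : x ≤ (x + b) / 2 := by linarith [hx.2]
      have := Polynomial.derivative_eval_mul_sub_le hxm
        (hmono.mono (Icc_subset_Icc hx.1 hm.2))
      rw [← Function.iterate_succ_apply' derivative, show (x + b) / 2 - x = u by ring] at this
      linarith [hP i (by omega) x hx]
    have ih_mid := ih (fun k hk => hP k (by omega)) hm
    rw [show b - (x + b) / 2 = u by ring] at ih_mid
    calc (derivative^[i + 1] P).eval x * (b - x) ^ ((i + 1 : ℕ) + 1 / p)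
        = 2 ^ ((i : ℝ) + 1 + 1 / p) *
            ((derivative^[i + 1] P).eval x * u * u ^ ((i : ℝ) + 1 / p)) := by
          rw [show b - x = 2 * u by ring, mul_rpow zero_le_two hu, Nat.cast_succ,
            show (i : ℝ) + 1 + 1 / p = (i + 1 / p) + 1 by ring, rpow_add' hu (by positivity),
            rpow_one]
          ring
      _ ≤ 2 ^ ((i : ℝ) + 1 + 1 / p) *
            ((derivative^[i] P).eval ((x + b) / 2) * u ^ ((i : ℝ) + 1 / p)) := by
          gcongr
      _ ≤ 2 ^ ((i : ℝ) + 1 + 1 / p) *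
            (2 ^ ((i : ℝ) * (i + 1) / 2 + i / p) * LqNorm (fun y => P.eval y) p a b) := by
          gcongr
      _ = 2 ^ (((i + 1 : ℕ) : ℝ) * ((i + 1 : ℕ) + 1) / 2 + (i + 1 : ℕ) / p) *
            LqNorm (fun y => P.eval y) p a b := by
          rw [← mul_assoc, ← rpow_add two_pos]
          push_cast
          ring_nf

theorem Polynomial.integral_sub_rpow_mul_derivative_eval (Q : ℝ[X]) {a b α : ℝ} (hab : a ≤ b)
    (hα : 0 < α) :
    ∫ x in a..b, (b - x) ^ α * Q.derivative.eval x =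
      α * (∫ x in a..b, (b - x) ^ (α - 1) * Q.eval x) - (b - a) ^ α * Q.eval a := by
  have hw : ∀ x ∈ Ioo (min a b) (max a b),
      HasDerivAt (fun y => (b - y) ^ α) (-1 * α * (b - x) ^ (α - 1)) x := fun x hx => by
    rw [max_eq_right hab] at hx
    exact ((hasDerivAt_id' x).const_sub b).rpow_const (Or.inl (sub_pos.2 hx.2).ne')
  rw [intervalIntegral.integral_mul_deriv_eq_deriv_mul_of_hasDerivAt
    (continuous_sub_rpow hα.le).continuousOn
    Q.continuous.continuousOn hw (fun x _ => Q.hasDerivAt x)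
    ((intervalIntegrable_sub_rpow (by linarith)).const_mul _)
    (Q.derivative.continuous.intervalIntegrable _ _)]
  simp only [sub_self, zero_rpow hα.ne', zero_mul, zero_sub, mul_assoc,
    intervalIntegral.integral_const_mul]
  ring

theorem integral_sub_rpow_mul_le_of_mul_rpow_le {g : ℝ → ℝ} (hg : Continuous g) {a b β γ M : ℝ}
    (hab : a ≤ b) (hγ : -1 < γ) (hγβ : -1 < γ - β) (h : ∀ x ∈ Ioo a b, g x * (b - x) ^ β ≤ M) :
    ∫ x in a..b, (b - x) ^ γ * g x ≤ M * ∫ x in a..b, (b - x) ^ (γ - β) := by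
  rw [← intervalIntegral.integral_const_mul]
  refine intervalIntegral.integral_mono_on_of_le_Ioo hab
    ((intervalIntegrable_sub_rpow hγ).mul_continuousOn hg.continuousOn)
    ((intervalIntegrable_sub_rpow hγβ).const_mul M) fun x hx => ?_
  have hbx : 0 < b - x := sub_pos.2 hx.2
  calc (b - x) ^ γ * g x = (b - x) ^ (γ - β) * (g x * (b - x) ^ β) := by
        rw [mul_left_comm, ← rpow_add hbx, sub_add_cancel, mul_comm]
    _ ≤ (b - x) ^ (γ - β) * M := mul_le_mul_of_nonneg_left (h x hx) (rpow_nonneg hbx.le _)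
    _ = M * (b - x) ^ (γ - β) := mul_comm _ _

theorem LqNorm_le_integral_sub_rpow_mul {f : ℝ → ℝ} (hf : Continuous f) {a b q α : ℝ}
    (hab : a ≤ b) (hf0 : ∀ x ∈ Icc a b, 0 ≤ f x) (hq : 0 < q) (hq1 : q < 1) (hα : 0 ≤ α)
    (hαq : α * q / (1 - q) < 1) :
    LqNorm f q a b ≤ (∫ x in a..b, (b - x) ^ α * f x) *
      (∫ x in a..b, (b - x) ^ (-(α * q / (1 - q)))) ^ ((1 - q) / q) := by
  set s := α * q / (1 - q) with hs
  have hwf0 : ∀ x ∈ Icc a b, 0 ≤ (b - x) ^ α * f x := fun x hx =>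
    mul_nonneg (rpow_nonneg (sub_nonneg.2 hx.2) _) (hf0 x hx)
  -- `s` is chosen so that the weights cancel: `α q = s (1 - q)`
  have hsplit : ∀ x ∈ Ioo a b,
      ((b - x) ^ α * f x) ^ q * ((b - x) ^ (-s)) ^ (1 - q) = |f x| ^ q := fun x hx => by
    have hbx : 0 < b - x := sub_pos.2 hx.2
    have hfx := hf0 x (Ioo_subset_Icc_self hx)
    rw [mul_rpow (rpow_nonneg hbx.le _) hfx, ← rpow_mul hbx.le, ← rpow_mul hbx.le,
      abs_of_nonneg hfx, mul_right_comm, ← rpow_add hbx,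
      show α * q + -s * (1 - q) = 0 by
        rw [hs, neg_mul, div_mul_cancel₀ _ (sub_pos.2 hq1).ne', add_neg_cancel], rpow_zero, one_mul]
  have holder := intervalIntegral.integral_rpow_mul_rpow_le hab
    (fun x hx => hwf0 x (Ioc_subset_Icc_self hx))
    (fun x hx => rpow_nonneg (sub_nonneg.2 hx.2) _)
    (((continuous_sub_rpow hα).mul hf).intervalIntegrable a b)
    (intervalIntegrable_sub_rpow (s := -s) (by linarith)) hq.le (by linarith) (add_sub_cancel _ _)
  rw [intervalIntegral.integral_congr_Ioo_of_le hab hsplit] at holder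
  have hI : 0 ≤ ∫ x in a..b, (b - x) ^ α * f x := intervalIntegral.integral_nonneg hab hwf0
  have hJ : 0 ≤ ∫ x in a..b, (b - x) ^ (-s) :=
    intervalIntegral.integral_nonneg hab fun x hx => rpow_nonneg (sub_nonneg.2 hx.2) _
  calc LqNorm f q a b
      ≤ ((∫ x in a..b, (b - x) ^ α * f x) ^ q *
          (∫ x in a..b, (b - x) ^ (-s)) ^ (1 - q)) ^ (1 / q) :=
        rpow_le_rpow (intervalIntegral.integral_nonneg hab fun x _ => by positivity) holder
          (by positivity)
    _ = (∫ x in a..b, (b - x) ^ α * f x) * (∫ x in a..b, (b - x) ^ (-s)) ^ ((1 - q) / q) := by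
        rw [mul_rpow (by positivity) (by positivity), ← rpow_mul hI, ← rpow_mul hJ,
          mul_one_div_cancel hq.ne', rpow_one, mul_one_div]

theorem exists_LqNorm_iterate_derivative_succ_le {p q a b : ℝ} (hp : 0 < p) (hq : 0 < q)
    (hab : a < b) {j : ℕ} (hj : (j + 1 : ℝ) < 1 / q - 1 / p) :
    ∃ C > 0, ∀ P : ℝ[X], (∀ m ≤ j + 1, ∀ x ∈ Icc a b, 0 ≤ (derivative^[m] P).eval x) →
      LqNorm (fun x => (derivative^[j + 1] P).eval x) q a b ≤
        C * LqNorm (fun x => P.eval x) p a b := by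
  have hq1 : q < 1 := by
    have : 1 < 1 / q := by linarith [one_div_pos.2 hp, (j.cast_nonneg : (0 : ℝ) ≤ j)]
    rwa [lt_one_div one_pos hq, div_one] at this
  set β : ℝ := j + 1 / p
  -- any exponent strictly between `β` and `1 / q - 1` works
  set α : ℝ := (β + (1 / q - 1)) / 2 with hα_def
  have hβ : 0 < β := by positivity
  have hβα : β < α := by linarith
  have hα : 0 < α := hβ.trans hβα
  have hs : α * q / (1 - q) < 1 := by
    have := mul_lt_mul_of_pos_right (show α < 1 / q - 1 by linarith) hq
    rw [sub_mul, one_div_mul_cancel hq.ne', one_mul] at this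
    rwa [div_lt_one (by linarith)]
  set K := (∫ x in a..b, (b - x) ^ (-(α * q / (1 - q)))) ^ ((1 - q) / q)
  set Kβ := ∫ x in a..b, (b - x) ^ (α - 1 - β) with hKβ_def
  have hK : 0 < K := by
    refine rpow_pos_of_pos ?_ _
    rw [integral_sub_rpow (by linarith)]
    exact div_pos (rpow_pos_of_pos (sub_pos.2 hab) _) (by linarith)
  have hKβ : 0 < Kβ := by
    rw [hKβ_def, integral_sub_rpow (by linarith)]
    exact div_pos (rpow_pos_of_pos (sub_pos.2 hab) _) (by linarith)
  refine ⟨α * 2 ^ (j * (j + 1) / 2 + j / p) * Kβ * K, by positivity, fun P hP => ?_⟩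
  have hibp := (derivative^[j] P).integral_sub_rpow_mul_derivative_eval hab.le hα
  rw [← Function.iterate_succ_apply' derivative] at hibp
  have hpointwise : ∀ x ∈ Ioo a b, (derivative^[j] P).eval x * (b - x) ^ β ≤
      2 ^ (j * (j + 1) / 2 + j / p) * LqNorm (fun y => P.eval y) p a b := fun x hx =>
    iterate_derivative_eval_mul_rpow_le hp j hP (Ioo_subset_Icc_self hx)
  calc LqNorm (fun x => (derivative^[j + 1] P).eval x) q a b
      ≤ (∫ x in a..b, (b - x) ^ α * (derivative^[j + 1] P).eval x) * K :=
        LqNorm_le_integral_sub_rpow_mul (derivative^[j + 1] P).continuous hab.le (hP _ le_rfl) hq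
          hq1 hα.le hs
    _ ≤ (α * ∫ x in a..b, (b - x) ^ (α - 1) * (derivative^[j] P).eval x) * K := by
        gcongr
        rw [hibp]
        exact sub_le_self _ (mul_nonneg (rpow_nonneg (sub_pos.2 hab).le _)
          (hP j (by omega) a (left_mem_Icc.2 hab.le)))
    _ ≤ (α * (2 ^ (j * (j + 1) / 2 + j / p) * LqNorm (fun y => P.eval y) p a b * Kβ)) * K := by
        gcongr
        exact integral_sub_rpow_mul_le_of_mul_rpow_le (derivative^[j] P).continuous hab.le
          (by linarith) (by linarith) hpointwise
    _ = α * 2 ^ (j * (j + 1) / 2 + j / p) * Kβ * K * LqNorm (fun x => P.eval x) p a b := by ring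

/-- Constrained Markov–Nikolskii inequality, case `l < 1/q - 1/p`. -/
theorem stmt2 (p q : ℝ) (hp : 0 < p) (hq : 0 < q) (k l : ℕ) (hlk : l ≤ k)
    (hl : (l : ℝ) < 1 / q - 1 / p) :
    ∃ C : ℝ, 0 < C ∧ ∀ n : ℕ, k ≤ n → ∀ P : Polynomial ℝ, AbsMono P n k →
      LqNorm (fun x => (derivative^[l] P).eval x) q (-1) 1 ≤
        C * LqNorm (fun x => P.eval x) p (-1) 1 := by
  rcases l.eq_zero_or_pos with rfl | hl0
  · have hqp : q < p := (one_div_lt_one_div hp hq).1 (by simpa using hl)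
    refine ⟨2 ^ (1 / q - 1 / p), by positivity, fun n _ P _ => ?_⟩
    simpa [one_add_one_eq_two] using
      LqNorm_le_rpow_mul_LqNorm_of_lt P.continuous (by norm_num : (-1 : ℝ) ≤ 1) hq hqp
  · obtain ⟨j, rfl⟩ := Nat.exists_eq_add_one_of_ne_zero hl0.ne'
    obtain ⟨C, hC, hbound⟩ := exists_LqNorm_iterate_derivative_succ_le hp hq
      (by norm_num : (-1 : ℝ) < 1) (by exact_mod_cast hl)
    exact ⟨C, hC, fun n _ P hP => hbound P fun m hm => hP.2 m (hm.trans hlk)⟩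
end

section
/- For all real numbers 0 < p < ∞ and 0 < q < ∞ and integers 1 ≤ l ≤ k with l = 1/q − 1/p, there exist a constant c = c(k, p, q) > 0 and an integer N = N(k, p, q) such that for every integer n ≥ N there exists a polynomial P ∈ Δ_n^{(k)} with ‖P‖_{L_p[−1,1]} > 0 and ‖P^{(l)}‖_{L_q[−1,1]} ≥ c · (log n)^l · ‖P‖_{L_p[−1,1]}. -/
open Polynomial MeasureTheory

/-!
The extremal polynomials are lacunary sums
`P = ∑_{j<m} s_j^{1/p} ((x + 1) / 2)^{s_j}` with `s_j = l 4^{j+1}`: they have nonnegative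
coefficients in powers of `x + 1`, so every derivative is nonnegative on `[-1, 1]`, and
`m ≍ log n` blocks fit into degree `n`.

Lower bound: on `[1 - 1/s_j, 1 - 1/(2 s_j)]` the `j`-th block of `P^{(l)}` alone is
`≳ s_j^{1/p + l} = s_j^{1/q}`, so `|P^{(l)}|^q ≳ s_j` on an interval of length `1/(2 s_j)`. Since
`s_{j+1} = 4 s_j` these intervals are disjoint, giving `‖P^{(l)}‖_q^q ≳ m`.

Upper bound: at a fixed `u = (x + 1)/2`, the ratio `R_j` of consecutive terms `s_j^{1/p} u^{s_j}`
satisfies `R_j^4 = 4^{3/p} R_{j+1}`. Hence the terms grow geometrically up to the largest one and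
decay geometrically after it, so `P^p ≲ ∑_j s_j u^{p s_j}`, whose integral is `≲ m`.

Together, `‖P^{(l)}‖_q / ‖P‖_p ≳ m^{1/q - 1/p} = m^l ≳ (log n)^l`.
-/

open Finset

theorem lqNorm_nonneg {f : ℝ → ℝ} {q a b : ℝ} (hab : a ≤ b) : 0 ≤ LqNorm f q a b :=
  Real.rpow_nonneg (intervalIntegral.integral_nonneg hab fun _ _ => by positivity) _

theorem lqNorm_le_of_integral_le {f : ℝ → ℝ} {q a b A : ℝ} (hq : 0 ≤ q) (hab : a ≤ b)
    (h : ∫ x in a..b, |f x| ^ q ≤ A) : LqNorm f q a b ≤ A ^ (1 / q) :=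
  Real.rpow_le_rpow (intervalIntegral.integral_nonneg hab fun _ _ => by positivity) h
    (by positivity)

theorem rpow_le_lqNorm_of_le_integral {f : ℝ → ℝ} {q a b A : ℝ} (hq : 0 ≤ q) (hA : 0 ≤ A)
    (h : A ≤ ∫ x in a..b, |f x| ^ q) : A ^ (1 / q) ≤ LqNorm f q a b :=
  Real.rpow_le_rpow hA h (by positivity)

theorem lqNorm_pos {f : ℝ → ℝ} {q a b : ℝ} (hf : Continuous f) (hq : 0 ≤ q) (hab : a < b)
    (hne : ∀ x ∈ Set.Ioo a b, f x ≠ 0) : 0 < LqNorm f q a b :=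
  Real.rpow_pos_of_pos (intervalIntegral.intervalIntegral_pos_of_pos_on
    (((continuous_abs.comp hf).rpow_const fun _ => Or.inr hq).intervalIntegrable _ _)
    (fun x hx => Real.rpow_pos_of_pos (abs_pos.mpr (hne x hx)) q) hab) _

theorem integral_half_add_one_rpow {c : ℝ} (hc : 0 ≤ c) :
    ∫ x in (-1 : ℝ)..1, ((x + 1) / 2) ^ c = 2 / (c + 1) := by
  simp_rw [add_div]
  rw [intervalIntegral.integral_comp_div_add (fun y : ℝ => y ^ c) two_ne_zero]
  norm_num [integral_rpow (Or.inl (by linarith : (-1 : ℝ) < c)),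
    Real.zero_rpow (by linarith : c + 1 ≠ 0)]
  ring

theorem geom_sum_le_inv_one_sub {x : ℝ} (hx0 : 0 ≤ x) (hx1 : x < 1) (n : ℕ) :
    ∑ i ∈ range n, x ^ i ≤ (1 - x)⁻¹ := by
  simpa [← Finset.range_eq_Ico] using geom_sum_Ico_le_of_lt_one (m := 0) (n := n) hx0 hx1

theorem sum_integral_le_integral_of_chain {F : ℝ → ℝ} (hF : Continuous F) (hF0 : ∀ x, 0 ≤ F x)
    {a b : ℕ → ℝ} {c d : ℝ} (hc : c ≤ a 0) (hab : ∀ j, a j ≤ b j) (hba : ∀ j, b j ≤ a (j + 1))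
    (hd : ∀ j, b j ≤ d) (m : ℕ) :
    ∑ j ∈ range m, ∫ x in a j..b j, F x ≤ ∫ x in c..d, F x := by
  have hint : ∀ u v, IntervalIntegrable F volume u v := hF.intervalIntegrable
  have hnonneg : ∀ {u v : ℝ}, u ≤ v → 0 ≤ ∫ x in u..v, F x :=
    fun huv => intervalIntegral.integral_nonneg huv fun x _ => hF0 x
  have hmono : ∀ n, a 0 ≤ b n := by
    intro n
    induction n with
    | zero => exact hab 0
    | succ n ih => exact (ih.trans (hba n)).trans (hab _)
  have hchain : ∀ n, ∑ j ∈ range (n + 1), ∫ x in a j..b j, F x ≤ ∫ x in a 0..b n, F x := by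
    intro n
    induction n with
    | zero => simp
    | succ n ih =>
      have h₁ := intervalIntegral.integral_add_adjacent_intervals (hint (a 0) (b n))
        (hint (b n) (a (n + 1)))
      have h₂ := intervalIntegral.integral_add_adjacent_intervals (hint (a 0) (a (n + 1)))
        (hint (a (n + 1)) (b (n + 1)))
      rw [sum_range_succ]
      linarith [hnonneg (hba n)]
  cases m with
  | zero => simpa using hnonneg (hc.trans ((hab 0).trans (hd 0)))
  | succ n =>
    exact (hchain n).trans (intervalIntegral.integral_mono_interval hc (hmono n) (hd n)
      (Filter.Eventually.of_forall hF0) (hint c d))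

theorem descFactorial_ge_half_pow {s l : ℕ} (h : 2 * l ≤ s) :
    ((s : ℝ) / 2) ^ l ≤ s.descFactorial l := by
  have hsub : (s : ℝ) / 2 ≤ ((s + 1 - l : ℕ) : ℝ) := by
    rw [Nat.cast_sub (by omega)]
    push_cast
    have : (2 * l : ℝ) ≤ s := by exact_mod_cast h
    linarith
  calc ((s : ℝ) / 2) ^ l ≤ ((s + 1 - l : ℕ) : ℝ) ^ l := pow_le_pow_left₀ (by positivity) hsub l
    _ ≤ s.descFactorial l := by exact_mod_cast Nat.pow_sub_le_descFactorial s l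

theorem half_le_pow_of_one_sub_le {s n : ℕ} {u : ℝ} (hs : 0 < s) (hn : n ≤ s)
    (hu : 1 - 1 / (2 * s) ≤ u) : 1 / 2 ≤ u ^ n := by
  have hs' : (1 : ℝ) ≤ s := by exact_mod_cast hs
  have hn' : (n : ℝ) ≤ s := by exact_mod_cast hn
  have hsmall : 1 / (2 * (s : ℝ)) ≤ 1 / 2 := by
    rw [div_le_div_iff₀ (by positivity) (by norm_num)]; linarith
  have hns : (n : ℝ) * (1 / (2 * s)) ≤ 1 / 2 := by
    rw [mul_one_div, div_le_iff₀ (by positivity)]; linarith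
  have hbern := one_add_mul_le_pow (a := -(1 / (2 * (s : ℝ)))) (by linarith) n
  have hhalf : (1 : ℝ) / 2 ≤ 1 + n * -(1 / (2 * s)) := by
    rw [mul_neg]; linarith
  calc (1 : ℝ) / 2 ≤ 1 + n * -(1 / (2 * s)) := hhalf
    _ ≤ (1 - 1 / (2 * s)) ^ n := by rwa [← sub_eq_add_neg] at hbern
    _ ≤ u ^ n := pow_le_pow_left₀ (by linarith) hu n

-- The right-hand side is the `l`-th derivative of `s^α ((x + 1) / 2)^s`.
theorem le_block_iterate_derivative {s l : ℕ} {α x : ℝ} (hs : 0 < s) (hls : 2 * l ≤ s)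
    (hx : 1 - 1 / s ≤ x) :
    (s : ℝ) ^ α * s ^ l * ((2 : ℝ) ^ (2 * l + 1))⁻¹ ≤
      (s : ℝ) ^ α / 2 ^ s * s.descFactorial l * (x + 1) ^ (s - l) := by
  set u := (x + 1) / 2
  have hu : 1 - 1 / (2 * (s : ℝ)) ≤ u := by
    have : 1 / (2 * (s : ℝ)) = 1 / s / 2 := by ring
    rw [this]; simp only [u]; linarith
  have hpow := half_le_pow_of_one_sub_le hs (Nat.sub_le s l) hu
  have hdesc := descFactorial_ge_half_pow hls
  have h2s : (2 : ℝ) ^ s = 2 ^ (s - l) * 2 ^ l := by rw [← pow_add, Nat.sub_add_cancel (by omega)]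
  calc (s : ℝ) ^ α * s ^ l * ((2 : ℝ) ^ (2 * l + 1))⁻¹
      = (s : ℝ) ^ α * ((s : ℝ) / 2) ^ l * (1 / 2) / 2 ^ l := by
        rw [div_pow, pow_succ, pow_mul']; field_simp
    _ ≤ (s : ℝ) ^ α * s.descFactorial l * u ^ (s - l) / 2 ^ l := by gcongr
    _ = (s : ℝ) ^ α / 2 ^ s * s.descFactorial l * (x + 1) ^ (s - l) := by
        rw [show x + 1 = 2 * u by simp only [u]; ring, mul_pow, h2s]
        field_simp

theorem exists_pow_le_and_log_le (L : ℕ) :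
    ∃ N : ℕ, ∀ n : ℕ, N ≤ n → ∃ m : ℕ, 0 < m ∧ L * 4 ^ m ≤ n ∧ Real.log n ≤ 6 * m := by
  set B := Nat.log 4 L + 1
  refine ⟨4 ^ (2 * B + 2), fun n hn => ?_⟩
  have hn0 : n ≠ 0 := by have := Nat.one_le_pow (2 * B + 2) 4 (by norm_num); omega
  set K := Nat.log 4 n
  have hK : 2 * B + 2 ≤ K := (Nat.le_log_iff_pow_le (by norm_num) hn0).mpr hn
  refine ⟨K - B, by omega, ?_, ?_⟩
  · calc L * 4 ^ (K - B) ≤ 4 ^ B * 4 ^ (K - B) :=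
          Nat.mul_le_mul_right _ (Nat.lt_pow_succ_log_self (by norm_num) L).le
      _ = 4 ^ K := by rw [← pow_add]; congr 1; omega
      _ ≤ n := Nat.pow_log_le_self 4 hn0
  · have hlt : (n : ℝ) < 4 ^ (K + 1) := by
      exact_mod_cast Nat.lt_pow_succ_log_self (by norm_num) n
    have hlog4 : Real.log 4 ≤ 3 := by
      linarith [Real.log_le_sub_one_of_pos (by norm_num : (0 : ℝ) < 4)]
    have hKB : ((K + 1 : ℕ) : ℝ) ≤ ((2 * (K - B) : ℕ) : ℝ) := by exact_mod_cast (by omega)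
    push_cast at hKB
    calc Real.log n ≤ Real.log (4 ^ (K + 1)) :=
          Real.log_le_log (by exact_mod_cast Nat.pos_of_ne_zero hn0) hlt.le
      _ = (K + 1) * Real.log 4 := by rw [Real.log_pow]; push_cast; ring
      _ ≤ (K + 1) * 3 := by gcongr
      _ ≤ 6 * ((K - B : ℕ) : ℝ) := by linarith

theorem eval_iterate_derivative_sum_C_mul_X_add_one_pow {ι : Type*} (s : Finset ι) (c : ι → ℝ)
    (e : ι → ℕ) (i : ℕ) (x : ℝ) :
    (derivative^[i] (∑ j ∈ s, C (c j) * (X + C 1) ^ e j)).eval x =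
      ∑ j ∈ s, c j * (e j).descFactorial i * (x + 1) ^ (e j - i) := by
  rw [iterate_derivative_sum, eval_finsetSum]
  refine sum_congr rfl fun j _ => ?_
  rw [iterate_derivative_C_mul, iterate_derivative_X_add_pow]
  simp [mul_assoc]

section PeakSum

variable {H : ℕ → ℝ} {θ ρ : ℝ}

theorem pow_mul_le_of_rise (hH : ∀ j, 0 ≤ H j) (hθ : 1 ≤ θ)
    (hrise : ∀ j, H (j + 1) ≤ H (j + 2) → θ * H j ≤ H (j + 1)) (j : ℕ) :
    ∀ d, H (j + d) ≤ H (j + d + 1) → θ ^ d * H j ≤ H (j + d) := by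
  intro d
  induction d with
  | zero => simp
  | succ d ih =>
    intro hd
    have hstep : θ * H (j + d) ≤ H (j + d + 1) := hrise (j + d) hd
    have hmono : H (j + d) ≤ H (j + d + 1) := by nlinarith [hH (j + d)]
    calc θ ^ (d + 1) * H j = θ * (θ ^ d * H j) := by ring
      _ ≤ θ * H (j + d) := mul_le_mul_of_nonneg_left (ih hmono) (by linarith)
      _ ≤ H (j + (d + 1)) := hstep

theorem le_pow_mul_of_decay (hH : ∀ j, 0 ≤ H j) (hρ0 : 0 ≤ ρ) (hρ1 : ρ ≤ 1)
    (hdecay : ∀ j, H (j + 1) ≤ H j → H (j + 2) ≤ ρ * H (j + 1)) {j : ℕ}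
    (hj : H (j + 1) ≤ H j) : ∀ i, H (j + 1 + i) ≤ ρ ^ i * H j := by
  have hstep : ∀ i, H (j + 1 + i + 1) ≤ ρ * H (j + 1 + i) := by
    intro i
    induction i with
    | zero => exact hdecay j hj
    | succ i ih => exact hdecay (j + 1 + i) (ih.trans (mul_le_of_le_one_left (hH _) hρ1))
  intro i
  induction i with
  | zero => simpa using hj
  | succ i ih =>
    calc H (j + 1 + (i + 1)) ≤ ρ * H (j + 1 + i) := hstep i
      _ ≤ ρ * (ρ ^ i * H j) := mul_le_mul_of_nonneg_left ih hρ0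
      _ = ρ ^ (i + 1) * H j := by ring

noncomputable def peakConst (θ ρ : ℝ) : ℝ := (1 - θ⁻¹)⁻¹ + 1 + (1 - ρ)⁻¹

theorem peakConst_pos (hθ : 1 < θ) (hρ : ρ < 1) : 0 < peakConst θ ρ := by
  have := inv_pos.mpr (sub_pos.mpr (inv_lt_one_of_one_lt₀ hθ))
  have := inv_pos.mpr (sub_pos.mpr hρ)
  unfold peakConst; linarith

theorem exists_sum_range_le_mul_of_rise_decay (hH : ∀ j, 0 ≤ H j) (hθ : 1 < θ) (hρ0 : 0 ≤ ρ)
    (hρ1 : ρ < 1) (hrise : ∀ j, H (j + 1) ≤ H (j + 2) → θ * H j ≤ H (j + 1))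
    (hdecay : ∀ j, H (j + 1) ≤ H j → H (j + 2) ≤ ρ * H (j + 1)) {m : ℕ} (hm : 0 < m) :
    ∃ j₀ ∈ range m, ∑ j ∈ range m, H j ≤ peakConst θ ρ * H j₀ := by
  obtain ⟨j₀, hj₀, hmax⟩ := exists_max_image (range m) H (nonempty_range_iff.mpr hm.ne')
  refine ⟨j₀, hj₀, ?_⟩
  have hj₀m := mem_range.mp hj₀
  have hleft : ∑ j ∈ range j₀, H j ≤ (1 - θ⁻¹)⁻¹ * H j₀ := by
    have hbound : ∀ j ∈ range j₀, H j ≤ θ⁻¹ ^ (j₀ - 1 - j) * H j₀ := by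
      intro j hj
      have hj := mem_range.mp hj
      have hd : j + (j₀ - 1 - j) = j₀ - 1 := by omega
      have key := pow_mul_le_of_rise hH hθ.le hrise j (j₀ - 1 - j) (by
        rw [hd, show j₀ - 1 + 1 = j₀ by omega]
        exact hmax _ (mem_range.mpr (by omega)))
      rw [hd] at key
      rw [inv_pow, ← div_eq_inv_mul, le_div_iff₀ (by positivity)]
      linarith [hmax (j₀ - 1) (mem_range.mpr (by omega))]
    calc ∑ j ∈ range j₀, H j ≤ ∑ j ∈ range j₀, θ⁻¹ ^ (j₀ - 1 - j) * H j₀ := sum_le_sum hbound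
      _ = (∑ d ∈ range j₀, θ⁻¹ ^ d) * H j₀ := by
        rw [← sum_mul, sum_range_reflect (fun d => θ⁻¹ ^ d) j₀]
      _ ≤ (1 - θ⁻¹)⁻¹ * H j₀ :=
        mul_le_mul_of_nonneg_right
          (geom_sum_le_inv_one_sub (by positivity) (inv_lt_one_of_one_lt₀ hθ) _) (hH _)
  have hright : ∑ j ∈ Ico j₀ m, H j ≤ (1 + (1 - ρ)⁻¹) * H j₀ := by
    have htail : ∀ i ∈ range (m - j₀ - 1), H (j₀ + (i + 1)) ≤ ρ ^ i * H j₀ := by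
      intro i hi
      have hi := mem_range.mp hi
      rw [show j₀ + (i + 1) = j₀ + 1 + i by omega]
      exact le_pow_mul_of_decay hH hρ0 hρ1.le hdecay (hmax _ (mem_range.mpr (by omega))) i
    rw [sum_Ico_eq_sum_range, show m - j₀ = m - j₀ - 1 + 1 by omega, sum_range_succ']
    calc ∑ i ∈ range (m - j₀ - 1), H (j₀ + (i + 1)) + H (j₀ + 0)
        ≤ (∑ i ∈ range (m - j₀ - 1), ρ ^ i) * H j₀ + H j₀ := by
          rw [sum_mul, add_zero]; exact add_le_add_left (sum_le_sum htail) _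
      _ ≤ (1 + (1 - ρ)⁻¹) * H j₀ := by
          nlinarith [geom_sum_le_inv_one_sub hρ0 hρ1 (m - j₀ - 1), hH j₀]
  rw [← sum_range_add_sum_Ico H hj₀m.le, peakConst]
  linarith

theorem rpow_sum_range_le_mul_sum_rpow (hH : ∀ j, 0 ≤ H j) (hθ : 1 < θ) (hρ0 : 0 ≤ ρ)
    (hρ1 : ρ < 1) (hrise : ∀ j, H (j + 1) ≤ H (j + 2) → θ * H j ≤ H (j + 1))
    (hdecay : ∀ j, H (j + 1) ≤ H j → H (j + 2) ≤ ρ * H (j + 1)) {p : ℝ} (hp : 0 < p) (m : ℕ) :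
    (∑ j ∈ range m, H j) ^ p ≤ peakConst θ ρ ^ p * ∑ j ∈ range m, H j ^ p := by
  rcases Nat.eq_zero_or_pos m with rfl | hm
  · simp [Real.zero_rpow hp.ne']
  obtain ⟨j₀, hj₀, hsum⟩ := exists_sum_range_le_mul_of_rise_decay hH hθ hρ0 hρ1 hrise hdecay hm
  have hK := (peakConst_pos hθ hρ1).le
  calc (∑ j ∈ range m, H j) ^ p ≤ (peakConst θ ρ * H j₀) ^ p :=
        Real.rpow_le_rpow (sum_nonneg fun j _ => hH j) hsum hp.le
    _ = peakConst θ ρ ^ p * H j₀ ^ p := Real.mul_rpow hK (hH j₀)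
    _ ≤ _ := mul_le_mul_of_nonneg_left
        (single_le_sum (f := fun j => H j ^ p) (fun j _ => Real.rpow_nonneg (hH j) p) hj₀)
        (Real.rpow_nonneg hK p)

end PeakSum

def lacunaryExp (L j : ℕ) : ℕ := L * 4 ^ (j + 1)

theorem lacunaryExp_succ (L j : ℕ) : lacunaryExp L (j + 1) = 4 * lacunaryExp L j := by
  unfold lacunaryExp; ring

theorem lacunaryExp_pos {L : ℕ} (hL : 0 < L) (j : ℕ) : 0 < lacunaryExp L j :=
  Nat.mul_pos hL (by positivity)

section LacunaryTerm

variable (α u : ℝ) (L : ℕ)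

noncomputable def lacunaryTerm (j : ℕ) : ℝ := (lacunaryExp L j : ℝ) ^ α * u ^ lacunaryExp L j

noncomputable def lacunaryRatio (j : ℕ) : ℝ := 4 ^ α * u ^ (3 * lacunaryExp L j)

theorem lacunaryTerm_succ (j : ℕ) :
    lacunaryTerm α u L (j + 1) = lacunaryRatio α u L j * lacunaryTerm α u L j := by
  unfold lacunaryTerm lacunaryRatio
  rw [lacunaryExp_succ, Nat.cast_mul, Nat.cast_ofNat, Real.mul_rpow (by norm_num) (by positivity),
    show 4 * lacunaryExp L j = 3 * lacunaryExp L j + lacunaryExp L j by ring, pow_add]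
  ring

theorem lacunaryRatio_pow_four (j : ℕ) :
    lacunaryRatio α u L j ^ 4 = (4 ^ α) ^ 3 * lacunaryRatio α u L (j + 1) := by
  unfold lacunaryRatio
  rw [lacunaryExp_succ, mul_pow, ← pow_mul, show 3 * (4 * lacunaryExp L j) =
    3 * lacunaryExp L j * 4 by ring]
  ring

variable {α u L}

theorem lacunaryTerm_pos (hL : 0 < L) (hu : 0 < u) (j : ℕ) : 0 < lacunaryTerm α u L j := by
  have := lacunaryExp_pos hL j
  unfold lacunaryTerm; positivity

theorem lacunaryTerm_rise (hα : 0 ≤ α) (hL : 0 < L) (hu : 0 < u) (j : ℕ)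
    (h : lacunaryTerm α u L (j + 1) ≤ lacunaryTerm α u L (j + 2)) :
    2 ^ α * lacunaryTerm α u L j ≤ lacunaryTerm α u L (j + 1) := by
  have hT := lacunaryTerm_pos (α := α) hL hu
  have hR1 : 1 ≤ lacunaryRatio α u L (j + 1) := by
    rw [lacunaryTerm_succ α u L (j + 1)] at h
    nlinarith [hT (j + 1)]
  have h4 : (1 : ℝ) ≤ 4 ^ α := Real.one_le_rpow (by norm_num) hα
  have hR : 2 ^ α ≤ lacunaryRatio α u L j := by
    refine (pow_le_pow_iff_left₀ (by positivity) (by unfold lacunaryRatio; positivity)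
      (by norm_num : 4 ≠ 0)).mp ?_
    have h24 : (2 : ℝ) ^ α * 2 ^ α = 4 ^ α := by
      rw [← Real.mul_rpow (by norm_num) (by norm_num)]; norm_num
    calc ((2 : ℝ) ^ α) ^ 4 = (4 ^ α) ^ 2 := by rw [← h24]; ring
      _ ≤ (4 ^ α) ^ 3 := pow_le_pow_right₀ h4 (by norm_num)
      _ ≤ (4 ^ α) ^ 3 * lacunaryRatio α u L (j + 1) := le_mul_of_one_le_right (by positivity) hR1
      _ = lacunaryRatio α u L j ^ 4 := (lacunaryRatio_pow_four α u L j).symm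
  rw [lacunaryTerm_succ]
  exact mul_le_mul_of_nonneg_right hR (hT j).le

theorem lacunaryTerm_decay (hα : 0 ≤ α) (hL : 0 < L) (hu : 0 < u) (j : ℕ)
    (h : lacunaryTerm α u L (j + 1) ≤ lacunaryTerm α u L j) :
    lacunaryTerm α u L (j + 2) ≤ (4 ^ α)⁻¹ * lacunaryTerm α u L (j + 1) := by
  have hT := lacunaryTerm_pos (α := α) hL hu
  have hR0 : 0 ≤ lacunaryRatio α u L j := by unfold lacunaryRatio; positivity
  have hR1 : lacunaryRatio α u L j ≤ 1 := by
    rw [lacunaryTerm_succ] at h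
    nlinarith [hT j]
  have h4 : (1 : ℝ) ≤ 4 ^ α := Real.one_le_rpow (by norm_num) hα
  have hR : lacunaryRatio α u L (j + 1) ≤ (4 ^ α)⁻¹ := by
    have hR' : 0 ≤ lacunaryRatio α u L (j + 1) := by unfold lacunaryRatio; positivity
    have h4R : (4 ^ α) ^ 3 * lacunaryRatio α u L (j + 1) ≤ 1 := by
      rw [← lacunaryRatio_pow_four]; exact pow_le_one₀ hR0 hR1
    rw [inv_eq_one_div, le_div_iff₀ (by positivity)]
    calc lacunaryRatio α u L (j + 1) * 4 ^ α
        ≤ (4 ^ α) ^ 3 * lacunaryRatio α u L (j + 1) := by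
          rw [mul_comm]
          exact mul_le_mul_of_nonneg_right (le_self_pow₀ h4 (by norm_num)) hR'
      _ ≤ 1 := h4R
  rw [lacunaryTerm_succ α u L (j + 1)]
  exact mul_le_mul_of_nonneg_right hR (hT _).le

end LacunaryTerm

theorem rpow_sum_lacunaryTerm_le {α u p : ℝ} {L : ℕ} (hα : 0 < α) (hL : 0 < L) (hu : 0 < u)
    (hp : 0 < p) (m : ℕ) :
    (∑ j ∈ range m, lacunaryTerm α u L j) ^ p ≤
      peakConst (2 ^ α) (4 ^ α)⁻¹ ^ p * ∑ j ∈ range m, lacunaryTerm α u L j ^ p :=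
  rpow_sum_range_le_mul_sum_rpow (fun j => (lacunaryTerm_pos hL hu j).le)
    (Real.one_lt_rpow (by norm_num) hα) (by positivity)
    (inv_lt_one_of_one_lt₀ (Real.one_lt_rpow (by norm_num) hα))
    (lacunaryTerm_rise hα.le hL hu) (lacunaryTerm_decay hα.le hL hu) hp m

theorem lacunaryTerm_one_div_rpow {u p : ℝ} (hp : 0 < p) (hu : 0 ≤ u) (L j : ℕ) :
    lacunaryTerm (1 / p) u L j ^ p =
      lacunaryExp L j * u ^ ((lacunaryExp L j : ℝ) * p) := by
  unfold lacunaryTerm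
  rw [Real.mul_rpow (by positivity) (by positivity), ← Real.rpow_mul (by positivity),
    one_div_mul_cancel hp.ne', Real.rpow_one, ← Real.rpow_natCast, ← Real.rpow_mul hu]

noncomputable def lacunaryPoly (α : ℝ) (L m : ℕ) : ℝ[X] :=
  ∑ j ∈ range m, C ((lacunaryExp L j : ℝ) ^ α / 2 ^ lacunaryExp L j) * (X + C 1) ^ lacunaryExp L j

theorem eval_iterate_derivative_lacunaryPoly (α : ℝ) (L m i : ℕ) (x : ℝ) :
    (derivative^[i] (lacunaryPoly α L m)).eval x =
      ∑ j ∈ range m, (lacunaryExp L j : ℝ) ^ α / 2 ^ lacunaryExp L j *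
        (lacunaryExp L j).descFactorial i * (x + 1) ^ (lacunaryExp L j - i) :=
  eval_iterate_derivative_sum_C_mul_X_add_one_pow _ _ _ i x

theorem eval_lacunaryPoly (α : ℝ) (L m : ℕ) (x : ℝ) :
    (lacunaryPoly α L m).eval x = ∑ j ∈ range m, lacunaryTerm α ((x + 1) / 2) L j := by
  have h := eval_iterate_derivative_lacunaryPoly α L m 0 x
  simp only [Function.iterate_zero, id_eq, Nat.descFactorial_zero, Nat.cast_one, mul_one,
    Nat.sub_zero] at h
  rw [h]
  refine sum_congr rfl fun j _ => ?_
  unfold lacunaryTerm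
  rw [div_pow]
  field_simp

theorem iterate_derivative_lacunaryPoly_nonneg (α : ℝ) (L m i : ℕ) {x : ℝ} (hx : -1 ≤ x) :
    0 ≤ (derivative^[i] (lacunaryPoly α L m)).eval x := by
  rw [eval_iterate_derivative_lacunaryPoly]
  have : 0 ≤ x + 1 := by linarith
  exact sum_nonneg fun j _ => by positivity

theorem eval_lacunaryPoly_pos (α : ℝ) {L m : ℕ} (hL : 0 < L) (hm : 0 < m) {x : ℝ} (hx : -1 < x) :
    0 < (lacunaryPoly α L m).eval x := by
  have hu : 0 < (x + 1) / 2 := by linarith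
  rw [eval_lacunaryPoly]
  exact sum_pos (fun j _ => lacunaryTerm_pos hL hu j) (nonempty_range_iff.mpr hm.ne')

theorem natDegree_lacunaryPoly_le (α : ℝ) (L m : ℕ) :
    (lacunaryPoly α L m).natDegree ≤ L * 4 ^ m := by
  refine natDegree_sum_le_of_forall_le _ _ fun j hj => ?_
  refine (natDegree_C_mul_le _ _).trans (natDegree_pow_le.trans ?_)
  rw [natDegree_X_add_C, mul_one]
  exact Nat.mul_le_mul_left L (Nat.pow_le_pow_right (by norm_num) (mem_range.mp hj))

theorem exists_integral_abs_eval_lacunaryPoly_rpow_le {p : ℝ} (hp : 0 < p) {L : ℕ} (hL : 0 < L) :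
    ∃ K : ℝ, 0 < K ∧ ∀ m : ℕ,
      ∫ x in (-1 : ℝ)..1, |(lacunaryPoly (1 / p) L m).eval x| ^ p ≤ K * m := by
  have hα : 0 < 1 / p := by positivity
  set K := peakConst (2 ^ (1 / p)) (4 ^ (1 / p))⁻¹
  have hK : 0 < K := peakConst_pos (Real.one_lt_rpow (by norm_num) hα)
    (inv_lt_one_of_one_lt₀ (Real.one_lt_rpow (by norm_num) hα))
  refine ⟨K ^ p * (2 / p), by positivity, fun m => ?_⟩
  set s : ℕ → ℝ := fun j => lacunaryExp L j
  have hs : ∀ j, 0 < s j := fun j => Nat.cast_pos.mpr (lacunaryExp_pos hL j)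
  have hpt : ∀ x ∈ Set.Ioo (-1 : ℝ) 1, |(lacunaryPoly (1 / p) L m).eval x| ^ p ≤
      K ^ p * ∑ j ∈ range m, s j * ((x + 1) / 2) ^ (s j * p) := by
    intro x hx
    have hu : 0 < (x + 1) / 2 := by linarith [hx.1]
    rw [eval_lacunaryPoly, abs_of_nonneg (sum_nonneg fun j _ => (lacunaryTerm_pos hL hu j).le)]
    refine (rpow_sum_lacunaryTerm_le hα hL hu hp m).trans_eq ?_
    simp only [lacunaryTerm_one_div_rpow hp hu.le, s, K]
  have hterm : ∀ j, s j * (2 / (s j * p + 1)) ≤ 2 / p := fun j => by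
    rw [mul_div_assoc', div_le_div_iff₀ (by positivity [hs j]) hp]
    nlinarith [hs j]
  calc ∫ x in (-1 : ℝ)..1, |(lacunaryPoly (1 / p) L m).eval x| ^ p
      ≤ ∫ x in (-1 : ℝ)..1, K ^ p * ∑ j ∈ range m, s j * ((x + 1) / 2) ^ (s j * p) := by
        refine intervalIntegral.integral_mono_on_of_le_Ioo (by norm_num) ?_ ?_ hpt <;>
          refine Continuous.intervalIntegrable ?_ _ _
        · exact (continuous_abs.comp (Polynomial.continuous _)).rpow_const fun _ => Or.inr hp.le
        · fun_prop (disch := positivity)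
    _ = K ^ p * ∑ j ∈ range m, s j * (2 / (s j * p + 1)) := by
        rw [intervalIntegral.integral_const_mul, intervalIntegral.integral_finsetSum]
        · simp only [intervalIntegral.integral_const_mul,
            integral_half_add_one_rpow (mul_pos (hs _) hp).le]
        · intro j _
          exact Continuous.intervalIntegrable (by fun_prop (disch := positivity)) _ _
    _ ≤ K ^ p * ∑ _j ∈ range m, 2 / p := by gcongr with j; exact hterm j
    _ = K ^ p * (2 / p) * m := by rw [sum_const, card_range, nsmul_eq_mul]; ring

theorem lacunaryExp_mul_rpow_le_abs_eval_iterate_derivative {p q : ℝ} (hq : 0 ≤ q) {l L m j : ℕ}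
    (hL : 0 < L) (hlL : l ≤ L) (hpq : (l + 1 / p) * q = 1) (hj : j ∈ range m) {x : ℝ}
    (hx : 1 - 1 / (lacunaryExp L j : ℝ) ≤ x) :
    lacunaryExp L j * ((2 : ℝ) ^ (2 * l + 1))⁻¹ ^ q ≤
      |(derivative^[l] (lacunaryPoly (1 / p) L m)).eval x| ^ q := by
  set s : ℕ := lacunaryExp L j
  have hs : 0 < s := lacunaryExp_pos hL j
  have hs1 : (1 : ℝ) ≤ s := Nat.one_le_cast.mpr hs
  have hls : 2 * l ≤ s := by
    have : 4 ≤ 4 ^ (j + 1) := Nat.le_self_pow (by omega) 4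
    simp only [s, lacunaryExp]; nlinarith
  have hx1 : 0 ≤ x + 1 := by
    have : 1 / (s : ℝ) ≤ 1 := by rw [div_le_one (by linarith)]; exact hs1
    linarith
  have hterm : (s : ℝ) ^ (1 / p) / 2 ^ s * s.descFactorial l * (x + 1) ^ (s - l) ≤
      (derivative^[l] (lacunaryPoly (1 / p) L m)).eval x := by
    rw [eval_iterate_derivative_lacunaryPoly]
    exact single_le_sum (f := fun i => (lacunaryExp L i : ℝ) ^ (1 / p) / 2 ^ lacunaryExp L i *
      (lacunaryExp L i).descFactorial l * (x + 1) ^ (lacunaryExp L i - l))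
      (fun i _ => by positivity) hj
  have hpow : ((s : ℝ) ^ (1 / p) * s ^ l * ((2 : ℝ) ^ (2 * l + 1))⁻¹) ^ q =
      s * ((2 : ℝ) ^ (2 * l + 1))⁻¹ ^ q := by
    rw [Real.mul_rpow (by positivity) (by positivity), ← Real.rpow_natCast (s : ℝ) l,
      ← Real.rpow_add (by linarith), ← Real.rpow_mul (by linarith), add_comm, hpq, Real.rpow_one]
  rw [← hpow]
  exact Real.rpow_le_rpow (by positivity)
    (((le_block_iterate_derivative hs hls hx).trans hterm).trans (le_abs_self _)) hq

theorem exists_le_integral_abs_iterate_derivative_lacunaryPoly_rpow {p q : ℝ} (hq : 0 < q)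
    {l L : ℕ} (hL : 0 < L) (hlL : l ≤ L) (hpq : (l + 1 / p) * q = 1) :
    ∃ c : ℝ, 0 < c ∧ ∀ m : ℕ,
      c * m ≤ ∫ x in (-1 : ℝ)..1, |(derivative^[l] (lacunaryPoly (1 / p) L m)).eval x| ^ q := by
  set b := ((2 : ℝ) ^ (2 * l + 1))⁻¹ ^ q
  refine ⟨b / 2, by positivity, fun m => ?_⟩
  set F := fun x => |(derivative^[l] (lacunaryPoly (1 / p) L m)).eval x| ^ q
  have hF : Continuous F :=
    (continuous_abs.comp (Polynomial.continuous _)).rpow_const fun _ => Or.inr hq.le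
  set s : ℕ → ℝ := fun j => lacunaryExp L j
  have hs1 : ∀ j, 1 ≤ s j := fun j => Nat.one_le_cast.mpr (lacunaryExp_pos hL j)
  have hblock : ∀ j ∈ range m, b / 2 ≤ ∫ x in (1 - 1 / s j)..(1 - 1 / (2 * s j)), F x := by
    intro j hj
    have hsj : s j ≠ 0 := by linarith [hs1 j]
    have hab : 1 - 1 / s j ≤ 1 - 1 / (2 * s j) := by
      have := hs1 j; gcongr; linarith
    calc b / 2 = (1 - 1 / (2 * s j) - (1 - 1 / s j)) * (s j * b) := by field_simp; ring
      _ ≤ ∫ x in (1 - 1 / s j)..(1 - 1 / (2 * s j)), F x := by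
          rw [← smul_eq_mul, ← intervalIntegral.integral_const]
          exact intervalIntegral.integral_mono_on hab intervalIntegrable_const
            (hF.intervalIntegrable _ _) fun x hx =>
              lacunaryExp_mul_rpow_le_abs_eval_iterate_derivative hq.le hL hlL hpq hj hx.1
  calc b / 2 * m = ∑ _j ∈ range m, b / 2 := by rw [sum_const, card_range, nsmul_eq_mul, mul_comm]
    _ ≤ ∑ j ∈ range m, ∫ x in (1 - 1 / s j)..(1 - 1 / (2 * s j)), F x := sum_le_sum hblock
    _ ≤ ∫ x in (-1 : ℝ)..1, F x := by
        refine sum_integral_le_integral_of_chain hF (fun x => by positivity) ?_ (fun j => ?_)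
          (fun j => ?_) (fun j => ?_) m
        · have : 1 / s 0 ≤ 1 := by rw [div_le_one (by linarith [hs1 0])]; exact hs1 0
          linarith
        · have := hs1 j; gcongr; linarith
        · simp only [s]
          rw [lacunaryExp_succ, Nat.cast_mul, Nat.cast_ofNat]
          gcongr
          · linarith [hs1 j]
          · norm_num
        · have : 0 < 1 / (2 * s j) := by have := hs1 j; positivity
          linarith

theorem stmt6_general (p q : ℝ) (hp : 0 < p) (hq : 0 < q) (k l : ℕ) (hl1 : 1 ≤ l)
    (hl : (l : ℝ) = 1 / q - 1 / p) :
    ∃ c : ℝ, 0 < c ∧ ∃ N : ℕ, ∀ n : ℕ, N ≤ n → ∃ P : Polynomial ℝ, AbsMono P n k ∧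
      0 < LqNorm (fun x => P.eval x) p (-1) 1 ∧
      c * (Real.log n) ^ l * LqNorm (fun x => P.eval x) p (-1) 1 ≤
        LqNorm (fun x => (derivative^[l] P).eval x) q (-1) 1 := by
  have hinv : 1 / q = l + 1 / p := by rw [hl]; ring
  have hpq : (l + 1 / p) * q = 1 := by rw [← hinv]; field_simp
  obtain ⟨K, hK, hupper⟩ := exists_integral_abs_eval_lacunaryPoly_rpow_le hp hl1
  obtain ⟨c, hc, hlower⟩ :=
    exists_le_integral_abs_iterate_derivative_lacunaryPoly_rpow hq hl1 le_rfl hpq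
  obtain ⟨N, hN⟩ := exists_pow_le_and_log_le l
  refine ⟨c ^ (1 / q) / (K ^ (1 / p) * 6 ^ l), by positivity, N, fun n hn => ?_⟩
  obtain ⟨m, hm, hdeg, hlog⟩ := hN n hn
  set P := lacunaryPoly (1 / p) l m
  refine ⟨P, ⟨(natDegree_lacunaryPoly_le _ _ _).trans hdeg, fun i _ x hx =>
    iterate_derivative_lacunaryPoly_nonneg _ _ _ _ hx.1⟩, lqNorm_pos (Polynomial.continuous _)
    hp.le (by norm_num) fun x hx => (eval_lacunaryPoly_pos _ hl1 hm hx.1).ne', ?_⟩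
  have hm' : (m : ℝ) ^ (1 / q) = m ^ l * m ^ (1 / p) := by
    rw [hinv, Real.rpow_add (by positivity), Real.rpow_natCast]
  have := Real.log_natCast_nonneg n
  have := lqNorm_nonneg (f := fun x => P.eval x) (q := p) (by norm_num : (-1 : ℝ) ≤ 1)
  calc c ^ (1 / q) / (K ^ (1 / p) * 6 ^ l) * Real.log n ^ l * LqNorm (fun x => P.eval x) p (-1) 1
      ≤ c ^ (1 / q) / (K ^ (1 / p) * 6 ^ l) * (6 * m) ^ l * (K * m) ^ (1 / p) := by
        gcongr; exact lqNorm_le_of_integral_le hp.le (by norm_num) (hupper m)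
    _ = (c * m) ^ (1 / q) := by
        rw [Real.mul_rpow hc.le (by positivity), Real.mul_rpow hK.le (by positivity), hm',
          mul_pow]
        field_simp
    _ ≤ _ := rpow_le_lqNorm_of_le_integral hq.le (by positivity) (hlower m)

/-- Lower bound in the critical case `l = 1/q - 1/p`: existence of extremal polynomials. -/
theorem stmt6 (p q : ℝ) (hp : 0 < p) (hq : 0 < q) (k l : ℕ) (hl1 : 1 ≤ l) (hlk : l ≤ k)
    (hl : (l : ℝ) = 1 / q - 1 / p) :
    ∃ c : ℝ, 0 < c ∧ ∃ N : ℕ, ∀ n : ℕ, N ≤ n → ∃ P : Polynomial ℝ, AbsMono P n k ∧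
      0 < LqNorm (fun x => P.eval x) p (-1) 1 ∧
      c * (Real.log n) ^ l * LqNorm (fun x => P.eval x) p (-1) 1 ≤
        LqNorm (fun x => (derivative^[l] P).eval x) q (-1) 1 :=
  stmt6_general p q hp hq k l hl1 hl
end

section
/- Let 0 < q < 1 and let P be a real polynomial with P(−1) = 0, P(x) ≥ 0 and P'(x) ≥ 0 for all x ∈ [−1, 1]. Then ∫_{−1}^{1} P'(x)^q dx ≤ (1/q) · ∫_{−1}^{1} P(x)^q (1 − x)^{−q} dx. -/
open Polynomial MeasureTheory

lemma bern_aux {q u : ℝ} (hq0 : 0 < q) (hq1 : q < 1) (hu : 0 ≤ u) :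
    u ^ q ≤ q * u + (1 - q) := by
  have h := Real.geom_mean_le_arith_mean2_weighted hq0.le (by linarith : (0:ℝ) ≤ 1 - q)
    hu zero_le_one (by ring)
  simpa using h

lemma key_aux {q a b t : ℝ} (hq0 : 0 < q) (hq1 : q < 1) (ha : 0 < a) (hb : 0 ≤ b)
    (ht : 0 < t) :
    b ^ q ≤ b * q * a ^ (q - 1) * t ^ (1 - q) + a ^ q * (-1 * (1 - q) * t ^ (-q))
      + 1 / q * (a ^ q * t ^ (-q)) := by
  set u : ℝ := b * t / a with hu_def
  have hu : 0 ≤ u := by positivity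
  have h1 : u ^ q ≤ q * u + (1 - q) := bern_aux hq0 hq1 hu
  have hat : 0 < a / t := by positivity
  have h2 : b ^ q = (a / t) ^ q * u ^ q := by
    rw [← Real.mul_rpow hat.le hu]
    congr 1
    rw [hu_def]; field_simp
  have h3 : (a / t) ^ q = a ^ q * t ^ (-q) := by
    rw [Real.div_rpow ha.le ht.le, Real.rpow_neg ht.le, div_eq_mul_inv]
  have haq : a ^ (q - 1) = a ^ q / a := Real.rpow_sub_one ha.ne' q
  have htq : t ^ (1 - q) = t * t ^ (-q) := by
    rw [show (1 : ℝ) - q = 1 + (-q) by ring, Real.rpow_add ht, Real.rpow_one]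
  have hpow_pos : 0 < a ^ q := Real.rpow_pos_of_pos ha q
  have htpow_pos : 0 < t ^ (-q) := Real.rpow_pos_of_pos ht (-q)
  have h4 : b ^ q ≤ a ^ q * t ^ (-q) * (q * u + (1 - q)) := by
    rw [h2, h3]
    exact mul_le_mul_of_nonneg_left h1 (by positivity)
  have h5 : a ^ q * t ^ (-q) * (q * u) = b * q * a ^ (q - 1) * t ^ (1 - q) := by
    rw [haq, htq, hu_def]
    field_simp
  have h6 : 2 * (1 - q) ≤ 1 / q := by
    rw [le_div_iff₀ hq0]
    nlinarith [sq_nonneg (2 * q - 1)]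
  nlinarith [mul_le_mul_of_nonneg_right h6 (le_of_lt (mul_pos hpow_pos htpow_pos))]

/-- For `0 < q < 1` and a nonnegative nondecreasing polynomial `P` on `[-1,1]` with
`P(-1) = 0`, one has `∫ P'^q ≤ (1/q) ∫ P^q (1-x)^(-q)`. -/
theorem stmt10 (q : ℝ) (hq0 : 0 < q) (hq1 : q < 1) (P : Polynomial ℝ)
    (h0 : P.eval (-1) = 0)
    (hP : ∀ x ∈ Set.Icc (-1 : ℝ) 1, 0 ≤ P.eval x)
    (hP' : ∀ x ∈ Set.Icc (-1 : ℝ) 1, 0 ≤ P.derivative.eval x) :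
    (∫ x in (-1 : ℝ)..1, (P.derivative.eval x) ^ q) ≤
      (1 / q) * ∫ x in (-1 : ℝ)..1, (P.eval x) ^ q * (1 - x) ^ (-q) := by
  rcases eq_or_ne P 0 with rfl | hP0
  · simp [Real.zero_rpow hq0.ne']
  -- P is monotone on [-1,1]
  have hone : (-1 : ℝ) ≤ 1 := by norm_num
  have hPdiff : Differentiable ℝ (fun x : ℝ => P.eval x) := P.differentiable
  have hmono : MonotoneOn (fun x : ℝ => P.eval x) (Set.Icc (-1 : ℝ) 1) := by
    apply monotoneOn_of_deriv_nonneg (convex_Icc _ _) (hPdiff.continuous.continuousOn)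
      (hPdiff.differentiableOn)
    intro x hx
    rw [interior_Icc] at hx
    rw [Polynomial.deriv]
    exact hP' x ⟨hx.1.le, hx.2.le⟩
  -- P is positive on (-1,1]
  have hpos : ∀ x ∈ Set.Ioc (-1 : ℝ) 1, 0 < P.eval x := by
    intro x hx
    rcases (hP x ⟨hx.1.le, hx.2⟩).lt_or_eq with h | h
    · exact h
    exfalso
    apply hP0
    apply P.eq_zero_of_infinite_isRoot
    apply Set.Infinite.mono (s := Set.Icc (-1 : ℝ) x)
    · intro t ht
      have ht' : t ∈ Set.Icc (-1 : ℝ) 1 := ⟨ht.1, ht.2.trans hx.2⟩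
      have h1 : P.eval t ≤ P.eval x := hmono ht' ⟨hx.1.le, hx.2⟩ ht.2
      have h2 : 0 ≤ P.eval t := hP t ht'
      exact le_antisymm (h ▸ h1) h2
    · exact Set.Icc_infinite hx.1
  -- continuity facts
  have hcq : Continuous (fun y : ℝ => y ^ q) := Real.continuous_rpow_const hq0.le
  have hcq' : Continuous (fun y : ℝ => y ^ (1 - q)) :=
    Real.continuous_rpow_const (by linarith)
  have hfc : Continuous (fun x : ℝ => (P.derivative.eval x) ^ q) :=
    hcq.comp (P.derivative.differentiable.continuous)
  have hgc : ContinuousOn (fun x : ℝ => (P.eval x) ^ q * (1 - x) ^ (-q)) (Set.Iio 1) := by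
    apply ContinuousOn.mul ((hcq.comp hPdiff.continuous).continuousOn)
    intro x hx
    have h1x : (1 : ℝ) - x ≠ 0 := by
      simp only [Set.mem_Iio] at hx; intro h; linarith
    exact ((Real.continuousAt_rpow_const _ _ (Or.inl h1x)).comp
      ((continuous_const.sub continuous_id).continuousAt)).continuousWithinAt
  -- integrability
  have hIf : IntervalIntegrable (fun x : ℝ => (P.derivative.eval x) ^ q) volume (-1) 1 :=
    hfc.intervalIntegrable _ _
  have hIg : IntervalIntegrable (fun x : ℝ => (P.eval x) ^ q * (1 - x) ^ (-q))
      volume (-1) 1 := by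
    have h1 : IntervalIntegrable (fun x : ℝ => x ^ (-q)) volume 0 2 :=
      intervalIntegral.intervalIntegrable_rpow' (by linarith)
    have h2 : IntervalIntegrable (fun x : ℝ => (1 - x) ^ (-q)) volume (-1) 1 := by
      have := h1.comp_sub_left 1
      norm_num at this
      exact this.symm
    exact h2.continuousOn_mul ((hcq.comp hPdiff.continuous).continuousOn)
  -- the auxiliary function G
  set H : ℝ → ℝ := fun x => ∫ t in (-1 : ℝ)..x, (P.eval t) ^ q * (1 - t) ^ (-q) with hH_def
  set I : ℝ → ℝ := fun x => ∫ t in (-1 : ℝ)..x, (P.derivative.eval t) ^ q with hI_def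
  set G : ℝ → ℝ := fun x => (P.eval x) ^ q * (1 - x) ^ (1 - q) + (1 / q) * H x - I x
    with hG_def
  have huIcc : Set.uIcc (-1 : ℝ) 1 = Set.Icc (-1 : ℝ) 1 := Set.uIcc_of_le hone
  -- continuity of G on [-1,1]
  have hGcont : ContinuousOn G (Set.Icc (-1 : ℝ) 1) := by
    have c1 : Continuous (fun x : ℝ => (P.eval x) ^ q * (1 - x) ^ (1 - q)) :=
      (hcq.comp hPdiff.continuous).mul
        (hcq'.comp (continuous_const.sub continuous_id))
    have c2 : ContinuousOn H (Set.Icc (-1 : ℝ) 1) := by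
      have := intervalIntegral.continuousOn_primitive_interval' hIg
        (by rw [huIcc]; exact Set.left_mem_Icc.2 hone)
      rwa [huIcc] at this
    have c3 : ContinuousOn I (Set.Icc (-1 : ℝ) 1) := by
      have := intervalIntegral.continuousOn_primitive_interval' hIf
        (by rw [huIcc]; exact Set.left_mem_Icc.2 hone)
      rwa [huIcc] at this
    exact (c1.continuousOn.add (continuousOn_const.mul c2)).sub c3
  -- derivative of G on (-1,1)
  have hGderiv : ∀ x ∈ Set.Ioo (-1 : ℝ) 1, HasDerivAt G
      (P.derivative.eval x * q * (P.eval x) ^ (q - 1) * (1 - x) ^ (1 - q)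
        + (P.eval x) ^ q * (-1 * (1 - q) * (1 - x) ^ (1 - q - 1))
        + (1 / q) * ((P.eval x) ^ q * (1 - x) ^ (-q))
        - (P.derivative.eval x) ^ q) x := by
    intro x hx
    have hxP : 0 < P.eval x := hpos x ⟨hx.1, hx.2.le⟩
    have hx1 : 0 < 1 - x := by linarith [hx.2]
    have hF : HasDerivAt (fun y : ℝ => (P.eval y) ^ q * (1 - y) ^ (1 - q))
        (P.derivative.eval x * q * (P.eval x) ^ (q - 1) * (1 - x) ^ (1 - q)
          + (P.eval x) ^ q * (-1 * (1 - q) * (1 - x) ^ (1 - q - 1))) x := by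
      have hf1 : HasDerivAt (fun y : ℝ => (P.eval y) ^ q)
          (P.derivative.eval x * q * (P.eval x) ^ (q - 1)) x :=
        (P.hasDerivAt x).rpow_const (Or.inl hxP.ne')
      have hg0 : HasDerivAt (fun y : ℝ => 1 - y) (-1 : ℝ) x := by
        simpa using (hasDerivAt_id x).const_sub 1
      have hg1 : HasDerivAt (fun y : ℝ => (1 - y) ^ (1 - q))
          (-1 * (1 - q) * (1 - x) ^ (1 - q - 1)) x :=
        hg0.rpow_const (Or.inl hx1.ne')
      exact hf1.mul hg1
    have hHd : HasDerivAt H ((P.eval x) ^ q * (1 - x) ^ (-q)) x := by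
      apply intervalIntegral.integral_hasDerivAt_right
        (hIg.mono_set (by rw [huIcc, Set.uIcc_of_le hx.1.le]; exact Set.Icc_subset_Icc le_rfl hx.2.le))
        (hgc.stronglyMeasurableAtFilter isOpen_Iio x hx.2)
      exact (hgc x hx.2).continuousAt (Iio_mem_nhds hx.2)
    have hId : HasDerivAt I ((P.derivative.eval x) ^ q) x := by
      apply intervalIntegral.integral_hasDerivAt_right
        (hIf.mono_set (by rw [huIcc, Set.uIcc_of_le hx.1.le]; exact Set.Icc_subset_Icc le_rfl hx.2.le))
        (hfc.stronglyMeasurable.stronglyMeasurableAtFilter)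
      exact hfc.continuousAt
    exact (hF.add (hHd.const_mul (1 / q))).sub hId
  -- G is monotone
  have hGmono : MonotoneOn G (Set.Icc (-1 : ℝ) 1) := by
    apply monotoneOn_of_deriv_nonneg (convex_Icc _ _) hGcont
    · intro x hx
      rw [interior_Icc] at hx
      exact (hGderiv x hx).differentiableAt.differentiableWithinAt
    · intro x hx
      rw [interior_Icc] at hx
      rw [(hGderiv x hx).deriv]
      have hxP : 0 < P.eval x := hpos x ⟨hx.1, hx.2.le⟩
      have hx1 : 0 < 1 - x := by linarith [hx.2]
      have hkey := key_aux hq0 hq1 hxP (hP' x ⟨hx.1.le, hx.2.le⟩) hx1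
      have hexp : (1 : ℝ) - q - 1 = -q := by ring
      rw [hexp]
      linarith [hkey]
  -- conclude
  have hfinal := hGmono (Set.left_mem_Icc.2 hone) (Set.right_mem_Icc.2 hone) hone
  have hGm1 : G (-1) = 0 := by
    simp [hG_def, hH_def, hI_def, h0, Real.zero_rpow hq0.ne',
      intervalIntegral.integral_same]
  have hG1 : G 1 = (1 / q) * (∫ x in (-1 : ℝ)..1, (P.eval x) ^ q * (1 - x) ^ (-q))
      - ∫ x in (-1 : ℝ)..1, (P.derivative.eval x) ^ q := by
    simp [hG_def, hH_def, hI_def, Real.zero_rpow (show (1:ℝ) - q ≠ 0 by linarith)]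
  rw [hGm1, hG1] at hfinal
  linarith
end

section
/- For every real number 0 < q < 1 there exists a constant C = C(q) > 0 such that for every real number c ∈ (0, 1], every positive integer n, and every real polynomial P of degree at most n with P(−1) = 0, P(x) ≥ 0 and P'(x) ≥ 0 for all x ∈ [−1, 1], one has ∫_{1 − c/n²}^{1} P(x)^q (1 − x)^{−q} dx ≤ C · c^{1−q} · ∫_{−1}^{1} P'(x)^q dx. -/
/-!
Let `A = P(1) = ∫ P'` and `δ = c / n²`. As `P` is nondecreasing, `P ≤ A` on `[1 - δ, 1]`, so the
left side is at most `A^q δ^(1-q) / (1-q)`. A Nikolskii-type inequality bounds the nonnegative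
polynomial `P'`, of degree `< n`, by `8 n² A` on `[-1, 1]`; since `f^q ≥ M^(q-1) f` for
`0 ≤ f ≤ M`, this gives `A^q ≤ (8 n²)^(1-q) ∫ P'^q`, and the powers of `n` cancel.
-/

open Polynomial MeasureTheory Real Set

lemma integral_cos_int_mul (k : ℤ) :
    ∫ θ in (0 : ℝ)..π, cos (k * θ) = if k = 0 then π else 0 := by
  split_ifs with hk
  · simp [hk]
  · have hk' : (k : ℝ) ≠ 0 := Int.cast_ne_zero.mpr hk
    simp [intervalIntegral.integral_comp_mul_left (fun θ => cos θ) hk', integral_cos,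
      sin_int_mul_pi]

lemma integral_cos_nat_mul_mul_cos_nat_mul (k j : ℕ) :
    ∫ θ in (0 : ℝ)..π, cos (k * θ) * cos (j * θ) =
      if k = j then (if k = 0 then π else π / 2) else 0 := by
  have product_to_sum : ∀ θ : ℝ, cos (k * θ) * cos (j * θ) =
      (cos (((k + j : ℤ) : ℝ) * θ) + cos (((k - j : ℤ) : ℝ) * θ)) / 2 := by
    intro θ
    push_cast
    rw [add_mul, sub_mul, cos_add, cos_sub]
    ring
  simp_rw [product_to_sum]
  rw [intervalIntegral.integral_div, intervalIntegral.integral_add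
    ((by fun_prop : Continuous _).intervalIntegrable _ _)
    ((by fun_prop : Continuous _).intervalIntegrable _ _), integral_cos_int_mul,
    integral_cos_int_mul]
  split_ifs <;> first | omega | ring

noncomputable def cosSpan (m : ℕ) : Submodule ℝ (ℝ → ℝ) :=
  Submodule.span ℝ ((fun (k : ℕ) (θ : ℝ) => cos (k * θ)) '' Iic m)

lemma cos_nat_mul_mem_cosSpan {m k : ℕ} (hk : k ≤ m) : (fun θ : ℝ => cos (k * θ)) ∈ cosSpan m :=
  Submodule.subset_span ⟨k, hk, rfl⟩

lemma cosSpan_mono {m m' : ℕ} (h : m ≤ m') : cosSpan m ≤ cosSpan m' :=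
  Submodule.span_mono (Set.image_mono (Iic_subset_Iic.mpr h))

lemma cos_mul_mem_cosSpan {m : ℕ} {g : ℝ → ℝ} (hg : g ∈ cosSpan m) :
    cos * g ∈ cosSpan (m + 1) := by
  suffices cosSpan m ≤ (cosSpan (m + 1)).comap (LinearMap.mulLeft ℝ cos) from this hg
  refine Submodule.span_le.mpr ?_
  rintro _ ⟨k, hk, rfl⟩
  rw [SetLike.mem_coe, Submodule.mem_comap, LinearMap.mulLeft_apply]
  rcases k with _ | j
  · have hcos : cos * (fun θ : ℝ => cos ((0 : ℕ) * θ)) = fun θ : ℝ => cos ((1 : ℕ) * θ) := by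
      ext θ
      simp
    rw [hcos]
    exact cos_nat_mul_mem_cosSpan (by omega)
  · have hk : j + 1 ≤ m := hk
    have product_to_sum : cos * (fun θ : ℝ => cos ((j + 1 : ℕ) * θ)) =
        (1 / 2 : ℝ) • (fun θ : ℝ => cos ((j + 2 : ℕ) * θ)) +
          (1 / 2 : ℝ) • (fun θ : ℝ => cos (j * θ)) := by
      ext θ
      simp only [Pi.mul_apply, Pi.add_apply, Pi.smul_apply, smul_eq_mul]
      push_cast
      rw [show (j + 2 : ℝ) * θ = (j + 1) * θ + θ by ring,
        show (j : ℝ) * θ = (j + 1) * θ - θ by ring, cos_add, cos_sub]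
      ring
    rw [product_to_sum]
    exact add_mem (Submodule.smul_mem _ _ (cos_nat_mul_mem_cosSpan (by omega)))
      (Submodule.smul_mem _ _ (cos_nat_mul_mem_cosSpan (by omega)))

lemma cos_pow_mem_cosSpan (j : ℕ) : (fun θ => cos θ ^ j) ∈ cosSpan j := by
  induction j with
  | zero => simpa using cos_nat_mul_mem_cosSpan (m := 0) le_rfl
  | succ j ih =>
    simp_rw [pow_succ']
    exact cos_mul_mem_cosSpan ih

lemma eval_cos_mem_cosSpan (Q : ℝ[X]) : (fun θ => Q.eval (cos θ)) ∈ cosSpan Q.natDegree := by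
  simp_rw [eval_eq_sum_range]
  rw [show (fun θ => ∑ i ∈ Finset.range (Q.natDegree + 1), Q.coeff i * cos θ ^ i) =
    ∑ i ∈ Finset.range (Q.natDegree + 1), Q.coeff i • fun θ => cos θ ^ i by ext; simp]
  exact Submodule.sum_mem _ fun i hi => Submodule.smul_mem _ _ <|
    cosSpan_mono (Nat.lt_succ_iff.mp (Finset.mem_range.mp hi)) (cos_pow_mem_cosSpan i)

lemma continuous_of_mem_cosSpan {m : ℕ} {g : ℝ → ℝ} (hg : g ∈ cosSpan m) : Continuous g := by
  induction hg using Submodule.span_induction with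
  | mem f hf =>
    obtain ⟨k, -, rfl⟩ := hf
    fun_prop
  | zero => exact continuous_const
  | add f h _ _ hf hh => exact hf.add hh
  | smul a f _ hf => exact hf.const_smul a

/-- The reproducing kernel of `cosSpan m` for `∫₀^π`; the weights reflect `∫₀^π cos² (iθ) = π / 2`
for `i ≠ 0` against `π` for `i = 0`. -/
noncomputable def cosKernel (m : ℕ) (θ₀ θ : ℝ) : ℝ :=
  ∑ i ∈ Finset.range (m + 1), (if i = 0 then 1 else 2) * cos (i * θ₀) * cos (i * θ)

lemma continuous_cosKernel (m : ℕ) (θ₀ : ℝ) : Continuous (cosKernel m θ₀) := by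
  unfold cosKernel
  fun_prop

lemma cosKernel_le (m : ℕ) (θ₀ θ : ℝ) : cosKernel m θ₀ θ ≤ 2 * m + 1 := by
  have hweights : ∑ i ∈ Finset.range (m + 1), (if i = 0 then 1 else 2 : ℝ) = 2 * m + 1 := by
    rw [Finset.sum_range_succ']
    simp only [Nat.add_eq_zero_iff, one_ne_zero, and_false, ↓reduceIte, Finset.sum_const,
      Finset.card_range, nsmul_eq_mul]
    ring
  rw [← hweights]
  refine Finset.sum_le_sum fun i _ => ?_
  have hcos : cos (i * θ₀) * cos (i * θ) ≤ 1 :=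
    (le_abs_self _).trans <| (abs_mul _ _).trans_le <|
      mul_le_one₀ (abs_cos_le_one _) (abs_nonneg _) (abs_cos_le_one _)
  rw [mul_assoc]
  exact mul_le_of_le_one_right (by split_ifs <;> norm_num) hcos

lemma integral_cos_nat_mul_mul_cosKernel {m k : ℕ} (hk : k ≤ m) (θ₀ : ℝ) :
    ∫ θ in (0 : ℝ)..π, cos (k * θ) * cosKernel m θ₀ θ = π * cos (k * θ₀) := by
  have hterm (i : ℕ) : ∫ θ in (0 : ℝ)..π,
      cos (k * θ) * ((if i = 0 then 1 else 2) * cos (i * θ₀) * cos (i * θ)) =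
        if k = i then π * cos (k * θ₀) else 0 := by
    simp_rw [mul_left_comm (cos (k * _)), intervalIntegral.integral_const_mul,
      integral_cos_nat_mul_mul_cos_nat_mul]
    split_ifs <;> simp_all
    ring
  simp_rw [cosKernel, Finset.mul_sum]
  rw [intervalIntegral.integral_finsetSum fun i _ =>
    (by fun_prop : Continuous _).intervalIntegrable _ _]
  rw [Finset.sum_congr rfl fun i _ => hterm i, Finset.sum_ite_eq]
  simp [Nat.lt_succ_of_le hk]

lemma integral_mul_cosKernel {m : ℕ} {g : ℝ → ℝ} (hg : g ∈ cosSpan m) (θ₀ : ℝ) :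
    ∫ θ in (0 : ℝ)..π, g θ * cosKernel m θ₀ θ = π * g θ₀ := by
  have hint {f : ℝ → ℝ} (hf : f ∈ cosSpan m) :
      IntervalIntegrable (fun θ => f θ * cosKernel m θ₀ θ) volume 0 π :=
    ((continuous_of_mem_cosSpan hf).mul (continuous_cosKernel m θ₀)).intervalIntegrable _ _
  induction hg using Submodule.span_induction with
  | mem f hf =>
    obtain ⟨k, hk, rfl⟩ := hf
    exact integral_cos_nat_mul_mul_cosKernel hk θ₀
  | zero => simp
  | add f h hf' hh' hf hh =>
    simp only [Pi.add_apply, add_mul]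
    rw [intervalIntegral.integral_add (hint hf') (hint hh'), hf, hh, mul_add]
  | smul a f _ hf =>
    simp only [Pi.smul_apply, smul_eq_mul, mul_assoc]
    rw [intervalIntegral.integral_const_mul, hf, mul_left_comm]

lemma le_integral_of_mem_cosSpan {m : ℕ} {g : ℝ → ℝ} (hg : g ∈ cosSpan m)
    (hg₀ : ∀ θ, 0 ≤ g θ) (θ₀ : ℝ) : g θ₀ ≤ (2 * m + 1) / π * ∫ θ in (0 : ℝ)..π, g θ := by
  have hcont := continuous_of_mem_cosSpan hg
  have h : ∫ θ in (0 : ℝ)..π, g θ * cosKernel m θ₀ θ ≤ ∫ θ in (0 : ℝ)..π, (2 * m + 1) * g θ :=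
    intervalIntegral.integral_mono_on pi_pos.le
      ((hcont.mul (continuous_cosKernel m θ₀)).intervalIntegrable _ _)
      ((continuous_const.mul hcont).intervalIntegrable _ _)
      fun θ _ => by rw [mul_comm]; exact mul_le_mul_of_nonneg_right (cosKernel_le m θ₀ θ) (hg₀ θ)
  rw [integral_mul_cosKernel hg, intervalIntegral.integral_const_mul] at h
  rw [div_mul_eq_mul_div, le_div_iff₀ pi_pos]
  linarith

lemma integral_sin_mul_comp_cos {f : ℝ → ℝ} (hf : Continuous f) :
    ∫ θ in (0 : ℝ)..π, sin θ * f (cos θ) = ∫ x in (-1 : ℝ)..1, f x := by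
  have h := intervalIntegral.integral_comp_mul_deriv (a := 0) (b := π) (f := cos)
    (f' := fun θ => -sin θ) (fun θ _ => hasDerivAt_cos θ) (by fun_prop) hf
  simp only [cos_zero, cos_pi, Function.comp, mul_neg, intervalIntegral.integral_neg] at h
  rw [intervalIntegral.integral_symm (-1 : ℝ) 1] at h
  simp_rw [mul_comm (sin _)]
  linarith

lemma two_div_pi_mul_le_sin {t θ : ℝ} (ht : 0 ≤ t) (hθ : θ ∈ Icc t (π - t)) :
    2 / π * t ≤ sin θ := by
  rcases le_total θ (π / 2) with h | h
  · exact (mul_le_mul_of_nonneg_left hθ.1 (by positivity)).trans (mul_le_sin (ht.trans hθ.1) h)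
  · rw [← sin_pi_sub]
    exact (mul_le_mul_of_nonneg_left (by linarith [hθ.2]) (by positivity)).trans
      (mul_le_sin (by linarith [hθ.2]) (by linarith))

/-- Away from the endpoints `sin θ ≥ 2t/π`, near them `g ≤ S`. -/
lemma integral_le_of_le_of_sin_mul {g : ℝ → ℝ} {S t : ℝ} (hg : Continuous g)
    (hg₀ : ∀ θ, 0 ≤ g θ) (hgS : ∀ θ, g θ ≤ S) (ht₀ : 0 < t) (ht : t ≤ π / 2) :
    ∫ θ in (0 : ℝ)..π, g θ ≤ 2 * t * S + π / (2 * t) * ∫ θ in (0 : ℝ)..π, sin θ * g θ := by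
  have hint (a b : ℝ) : IntervalIntegrable g volume a b := hg.intervalIntegrable a b
  have hend {a b : ℝ} (hab : a ≤ b) : ∫ θ in a..b, g θ ≤ (b - a) * S := by
    simpa [mul_comm] using intervalIntegral.integral_mono_on hab (hint a b)
      (continuous_const.intervalIntegrable (μ := volume) a b) fun θ _ => hgS θ
  have hmid : ∫ θ in t..(π - t), g θ ≤ π / (2 * t) * ∫ θ in (0 : ℝ)..π, sin θ * g θ := by
    calc ∫ θ in t..(π - t), g θ ≤ ∫ θ in t..(π - t), π / (2 * t) * (sin θ * g θ) := by
          refine intervalIntegral.integral_mono_on (by linarith) (hint _ _)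
            ((by fun_prop : Continuous _).intervalIntegrable _ _) fun θ hθ => ?_
          have hsin := two_div_pi_mul_le_sin ht₀.le hθ
          have hone : 1 ≤ π / (2 * t) * sin θ :=
            calc (1 : ℝ) = π / (2 * t) * (2 / π * t) := by field_simp
              _ ≤ π / (2 * t) * sin θ := by gcongr
          linarith [mul_le_mul_of_nonneg_right hone (hg₀ θ)]
      _ = π / (2 * t) * ∫ θ in t..(π - t), sin θ * g θ := intervalIntegral.integral_const_mul _ _
      _ ≤ π / (2 * t) * ∫ θ in (0 : ℝ)..π, sin θ * g θ := by
          gcongr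
          refine intervalIntegral.integral_mono_interval ht₀.le (by linarith) (by linarith) ?_
            ((by fun_prop : Continuous _).intervalIntegrable _ _)
          filter_upwards [ae_restrict_mem measurableSet_Ioc] with θ hθ
          exact mul_nonneg (sin_nonneg_of_nonneg_of_le_pi hθ.1.le hθ.2) (hg₀ θ)
  rw [← intervalIntegral.integral_add_adjacent_intervals (hint 0 t) (hint t π),
    ← intervalIntegral.integral_add_adjacent_intervals (hint t (π - t)) (hint (π - t) π)]
  linarith [hend ht₀.le, hend (show π - t ≤ π by linarith)]

/-- A Nikolskii-type inequality: substituting `x = cos θ` turns `Q` into a cosine polynomial `g`,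
whose supremum is controlled by `∫ g` through `cosKernel`, and `∫ g` by `∫ g sin = ∫ Q`. -/
lemma eval_le_integral_of_nonneg (Q : ℝ[X]) (hQ : ∀ x ∈ Icc (-1 : ℝ) 1, 0 ≤ Q.eval x)
    {x : ℝ} (hx : x ∈ Icc (-1 : ℝ) 1) :
    Q.eval x ≤ 4 / π * (2 * Q.natDegree + 1) ^ 2 * ∫ y in (-1 : ℝ)..1, Q.eval y := by
  set m := Q.natDegree
  set g : ℝ → ℝ := fun θ => Q.eval (cos θ) with hg
  have hg₀ (θ : ℝ) : 0 ≤ g θ := hQ _ ⟨neg_one_le_cos θ, cos_le_one θ⟩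
  set J := ∫ θ in (0 : ℝ)..π, g θ
  have hsup (θ : ℝ) : g θ ≤ (2 * m + 1) / π * J :=
    le_integral_of_mem_cosSpan (eval_cos_mem_cosSpan Q) hg₀ θ
  set t := π / (4 * (2 * m + 1))
  have hm : (0 : ℝ) < 2 * m + 1 := by positivity
  have ht : t ≤ π / 2 := div_le_div_of_nonneg_left pi_pos.le (by norm_num) (by linarith)
  have hJ := integral_le_of_le_of_sin_mul (by fun_prop) hg₀ hsup (by positivity) ht
  rw [integral_sin_mul_comp_cos Q.continuous] at hJ
  have hend : 2 * t * ((2 * m + 1) / π * J) = J / 2 := by simp only [t]; field_simp; ring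
  have hmid : π / (2 * t) = 2 * (2 * m + 1) := by simp only [t]; field_simp; ring
  rw [hend, hmid] at hJ
  calc Q.eval x = g (arccos x) := by simp [hg, cos_arccos hx.1 hx.2]
    _ ≤ (2 * m + 1) / π * J := hsup _
    _ ≤ (2 * m + 1) / π * (4 * (2 * m + 1) * ∫ y in (-1 : ℝ)..1, Q.eval y) := by gcongr; linarith
    _ = _ := by ring

lemma eval_le_integral_of_natDegree_lt {Q : ℝ[X]} {n : ℕ} (hQn : Q.natDegree < n)
    (hQ : ∀ x ∈ Icc (-1 : ℝ) 1, 0 ≤ Q.eval x) {x : ℝ} (hx : x ∈ Icc (-1 : ℝ) 1) :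
    Q.eval x ≤ 8 * n ^ 2 * ∫ y in (-1 : ℝ)..1, Q.eval y := by
  have hI : 0 ≤ ∫ y in (-1 : ℝ)..1, Q.eval y := intervalIntegral.integral_nonneg (by norm_num) hQ
  have hdeg : (2 * Q.natDegree + 1 : ℝ) ≤ 2 * n := by
    exact_mod_cast (by omega : 2 * Q.natDegree + 1 ≤ 2 * n)
  have hπ : 4 / π ≤ 2 := by rw [div_le_iff₀ pi_pos]; linarith [two_le_pi]
  calc Q.eval x ≤ 4 / π * (2 * Q.natDegree + 1) ^ 2 * ∫ y in (-1 : ℝ)..1, Q.eval y :=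
        eval_le_integral_of_nonneg Q hQ hx
    _ ≤ 2 * (2 * n) ^ 2 * ∫ y in (-1 : ℝ)..1, Q.eval y := by gcongr
    _ = 8 * n ^ 2 * ∫ y in (-1 : ℝ)..1, Q.eval y := by ring

lemma rpow_sub_one_mul_le_rpow {y M q : ℝ} (hq : q ≤ 1) (hy : 0 ≤ y) (hyM : y ≤ M) :
    M ^ (q - 1) * y ≤ y ^ q := by
  rcases hy.eq_or_lt with rfl | hy
  · simpa using rpow_nonneg le_rfl q
  · calc M ^ (q - 1) * y ≤ y ^ (q - 1) * y :=
          mul_le_mul_of_nonneg_right (rpow_le_rpow_of_nonpos hy hyM (by linarith)) hy.le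
      _ = y ^ q := by rw [rpow_sub_one hy.ne', div_mul_cancel₀ _ hy.ne']

lemma rpow_integral_le {f : ℝ → ℝ} {a b K q : ℝ} (hab : a ≤ b) (hq₀ : 0 < q) (hq₁ : q ≤ 1)
    (hK : 0 < K) (hf : Continuous f) (hf₀ : ∀ x ∈ Icc a b, 0 ≤ f x)
    (hfK : ∀ x ∈ Icc a b, f x ≤ K * ∫ y in a..b, f y) :
    (∫ x in a..b, f x) ^ q ≤ K ^ (1 - q) * ∫ x in a..b, f x ^ q := by
  set A := ∫ x in a..b, f x
  have hA : 0 ≤ A := intervalIntegral.integral_nonneg hab hf₀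
  have hfq : 0 ≤ ∫ x in a..b, f x ^ q :=
    intervalIntegral.integral_nonneg hab fun x hx => rpow_nonneg (hf₀ x hx) q
  rcases hA.eq_or_lt with hA₀ | hA₀
  · rw [← hA₀, zero_rpow hq₀.ne']
    positivity
  have hlow : (K * A) ^ (q - 1) * A ≤ ∫ x in a..b, f x ^ q := by
    rw [← intervalIntegral.integral_const_mul]
    exact intervalIntegral.integral_mono_on hab ((continuous_const.mul hf).intervalIntegrable _ _)
      (((continuous_rpow_const hq₀.le).comp hf).intervalIntegrable _ _)
      fun x hx => rpow_sub_one_mul_le_rpow hq₁ (hf₀ x hx) (hfK x hx)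
  calc A ^ q = K ^ (1 - q) * ((K * A) ^ (q - 1) * A) := by
        rw [mul_rpow hK.le hA, rpow_sub hK, rpow_sub hK, rpow_sub hA₀, rpow_one, rpow_one]
        field_simp
    _ ≤ K ^ (1 - q) * ∫ x in a..b, f x ^ q := by gcongr

lemma integral_sub_rpow_neg {b δ q : ℝ} (hq : q < 1) :
    ∫ x in (b - δ)..b, (b - x) ^ (-q) = δ ^ (1 - q) / (1 - q) := by
  rw [intervalIntegral.integral_comp_sub_left (fun u => u ^ (-q)), sub_self, sub_sub_cancel,
    integral_rpow (Or.inl (by linarith)), zero_rpow (by linarith), sub_zero, neg_add_eq_sub]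

lemma integral_rpow_mul_sub_rpow_neg_le {f : ℝ → ℝ} {b δ q M : ℝ} (hδ : 0 ≤ δ) (hq₀ : 0 ≤ q)
    (hq₁ : q < 1) (hf : Continuous f) (hf₀ : ∀ x ∈ Icc (b - δ) b, 0 ≤ f x)
    (hfM : ∀ x ∈ Icc (b - δ) b, f x ≤ M) :
    ∫ x in (b - δ)..b, f x ^ q * (b - x) ^ (-q) ≤ M ^ q * (δ ^ (1 - q) / (1 - q)) := by
  have hw : IntervalIntegrable (fun x => (b - x) ^ (-q)) volume (b - δ) b := by
    simpa using ((intervalIntegral.intervalIntegrable_rpow' (a := 0) (b := δ)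
      (by linarith : -1 < -q)).comp_sub_left b).symm
  rw [← integral_sub_rpow_neg hq₁, ← intervalIntegral.integral_const_mul]
  exact intervalIntegral.integral_mono_on (by linarith)
    (hw.continuousOn_mul ((continuous_rpow_const hq₀).comp hf).continuousOn) (hw.const_mul _)
    fun x hx => mul_le_mul_of_nonneg_right (rpow_le_rpow (hf₀ x hx) (hfM x hx) hq₀)
      (rpow_nonneg (by linarith [hx.2]) _)

/-- For `0 < q < 1`, the contribution near the right endpoint of `∫ P^q (1-x)^(-q)` is
controlled by `c^(1-q) ∫ P'^q` for nonnegative nondecreasing polynomials vanishing at `-1`. -/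
theorem stmt11 (q : ℝ) (hq0 : 0 < q) (hq1 : q < 1) :
    ∃ C : ℝ, 0 < C ∧ ∀ c : ℝ, 0 < c → c ≤ 1 → ∀ n : ℕ, 0 < n →
      ∀ P : Polynomial ℝ, P.natDegree ≤ n → P.eval (-1) = 0 →
        (∀ x ∈ Set.Icc (-1 : ℝ) 1, 0 ≤ P.eval x) →
        (∀ x ∈ Set.Icc (-1 : ℝ) 1, 0 ≤ P.derivative.eval x) →
        (∫ x in (1 - c / (n : ℝ) ^ 2)..1, (P.eval x) ^ q * (1 - x) ^ (-q)) ≤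
          C * c ^ (1 - q) * ∫ x in (-1 : ℝ)..1, (P.derivative.eval x) ^ q := by
  have hq : 0 < 1 - q := by linarith
  refine ⟨8 ^ (1 - q) / (1 - q), by positivity, ?_⟩
  intro c hc₀ hc₁ n hn P hPn hP_neg_one hP₀ hP'₀
  set δ := c / (n : ℝ) ^ 2
  have hδ₁ : δ ≤ 1 := (div_le_self hc₀.le (by exact_mod_cast Nat.one_le_pow _ _ hn)).trans hc₁
  have hsub : Icc (1 - δ) 1 ⊆ Icc (-1) 1 := Icc_subset_Icc (by linarith) le_rfl
  have hmono : MonotoneOn (fun x => P.eval x) (Icc (-1) 1) :=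
    monotoneOn_of_deriv_nonneg (convex_Icc _ _) P.continuous.continuousOn
      P.differentiable.differentiableOn fun x hx => by
        rw [Polynomial.deriv]; exact hP'₀ x (interior_subset hx)
  have hLHS := integral_rpow_mul_sub_rpow_neg_le (by positivity) hq0.le hq1 P.continuous
    (fun x hx => hP₀ x (hsub hx)) (fun x hx => hmono (hsub hx) ⟨by norm_num, le_rfl⟩ hx.2)
  have hFTC : ∫ x in (-1 : ℝ)..1, P.derivative.eval x = P.eval 1 := by
    rw [intervalIntegral.integral_eq_sub_of_hasDerivAt (fun x _ => P.hasDerivAt x)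
      (P.derivative.continuous.intervalIntegrable _ _), hP_neg_one, sub_zero]
  have hRHS := rpow_integral_le (by norm_num) hq0 hq1.le (by positivity) P.derivative.continuous
    hP'₀ fun x hx => eval_le_integral_of_natDegree_lt
      ((P.natDegree_derivative_le).trans_lt (by omega)) hP'₀ hx
  rw [hFTC] at hRHS
  have hscale : (8 * (n : ℝ) ^ 2) ^ (1 - q) * δ ^ (1 - q) = 8 ^ (1 - q) * c ^ (1 - q) := by
    rw [← mul_rpow (by positivity) (by positivity), ← mul_rpow (by norm_num) hc₀.le]
    congr 1
    simp only [δ]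
    field_simp
  calc _ ≤ P.eval 1 ^ q * (δ ^ (1 - q) / (1 - q)) := hLHS
    _ ≤ (8 * n ^ 2) ^ (1 - q) * (∫ x in (-1 : ℝ)..1, P.derivative.eval x ^ q) *
          (δ ^ (1 - q) / (1 - q)) := by gcongr
    _ = 8 ^ (1 - q) / (1 - q) * c ^ (1 - q) * ∫ x in (-1 : ℝ)..1, P.derivative.eval x ^ q := by
          linear_combination
            (∫ x in (-1 : ℝ)..1, P.derivative.eval x ^ q) / (1 - q) * hscale
end

section
/- For every real number α > 0 there exists a constant C = C(α) > 0 such that for every integer n ≥ 2, one has ∫_{0}^{1} Q_{n,α}(x)^{1/α} dx ≥ C · log n. -/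
open Polynomial MeasureTheory

/-- `Q_{n,α}(x) = Σ_{j=0}^n ((α)_j / j!) x^j`, the `n`-th partial sum of the binomial
series of `(1-x)^(-α)`, where `(α)_j = α(α+1)⋯(α+j-1)` is the rising factorial. -/
noncomputable def Qpoly (α : ℝ) (n : ℕ) (x : ℝ) : ℝ :=
  ∑ j ∈ Finset.range (n + 1), (∏ i ∈ Finset.range j, (α + i)) / (j.factorial : ℝ) * x ^ j

/-!
The coefficients `c_j = (α)_j / j!` satisfy `∑_{j ≤ m} c_j = (α + 1)_m / m! = ∏_{k=1}^m (1 + α/k)`,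
and `1 + α/k ≥ ((k + 1 + α)/(k + α))^α` because `(1 + 1/s)^α ≤ e^{α/s} ≤ s/(s - α)`; telescoping,
`∑_{j ≤ m} c_j ≥ ((m + 1 + α)/(1 + α))^α`. For `0 ≤ x ≤ 1 - 1/n` put `m = ⌊1/(2(1 - x))⌋ ≤ n`:
by Bernoulli `x^m ≥ 1 - m(1 - x) ≥ 1/2`, so `Q_{n,α}(x) ≥ x^m ∑_{j ≤ m} c_j ≳ (1 - x)^{-α}`.
Hence `Q_{n,α}(x)^{1/α} ≥ c_α/(1 - x)` there, and integrating over `[0, 1 - 1/n]` gives `c_α log n`.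
-/

open Finset Real

noncomputable def Qcoeff (α : ℝ) (j : ℕ) : ℝ := (∏ i ∈ range j, (α + i)) / (j.factorial : ℝ)

lemma Qcoeff_nonneg {α : ℝ} (hα : 0 ≤ α) (j : ℕ) : 0 ≤ Qcoeff α j := by
  unfold Qcoeff; positivity

lemma Qcoeff_succ (α : ℝ) (j : ℕ) : Qcoeff α (j + 1) = Qcoeff α j * ((α + j) / (j + 1)) := by
  simp only [Qcoeff, prod_range_succ, Nat.factorial_succ, Nat.cast_mul, Nat.cast_succ]
  field_simp

lemma Qcoeff_succ_eq_mul_Qcoeff_add_one (α : ℝ) (j : ℕ) :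
    Qcoeff α (j + 1) = α / (j + 1) * Qcoeff (α + 1) j := by
  simp only [Qcoeff, prod_range_succ', Nat.factorial_succ, Nat.cast_mul, Nat.cast_succ]
  field_simp
  push_cast
  ring_nf

lemma sum_range_succ_Qcoeff (α : ℝ) (m : ℕ) :
    ∑ j ∈ range (m + 1), Qcoeff α j = Qcoeff (α + 1) m := by
  induction m with
  | zero => simp [Qcoeff]
  | succ m ih =>
    rw [sum_range_succ, ih, Qcoeff_succ_eq_mul_Qcoeff_add_one, Qcoeff_succ]
    field_simp
    ring

lemma one_add_inv_rpow_le_div_sub {s α : ℝ} (hα : 0 ≤ α) (hαs : α < s) :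
    (1 + s⁻¹) ^ α ≤ s / (s - α) := by
  have hs : 0 < s := hα.trans_lt hαs
  calc (1 + s⁻¹) ^ α ≤ exp (s⁻¹) ^ α := by
        gcongr
        linarith [add_one_le_exp s⁻¹]
    _ = exp (α / s) := by rw [← exp_mul]; ring_nf
    _ ≤ 1 / (1 - α / s) :=
        exp_bound_div_one_sub_of_interval (by positivity) ((div_lt_one hs).2 hαs)
    _ = s / (s - α) := by field_simp

lemma rpow_le_Qcoeff_add_one {α : ℝ} (hα : 0 ≤ α) (m : ℕ) :
    ((m + 1 + α) / (1 + α)) ^ α ≤ Qcoeff (α + 1) m := by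
  induction m with
  | zero => simp [Qcoeff, div_self (by positivity : 1 + α ≠ 0)]
  | succ m ih =>
    have hstep := one_add_inv_rpow_le_div_sub (s := m + 1 + α) hα
      (by linarith [m.cast_nonneg (α := ℝ)])
    have hsplit : ((↑(m + 1) + 1 + α) / (1 + α)) =
        (m + 1 + α) / (1 + α) * (1 + (m + 1 + α)⁻¹) := by
      push_cast; field_simp; ring
    rw [hsplit, mul_rpow (by positivity) (by positivity), Qcoeff_succ]
    calc _ ≤ Qcoeff (α + 1) m * ((m + 1 + α) / (m + 1 + α - α)) := by
          gcongr
          exact Qcoeff_nonneg (by linarith) m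
      _ = _ := by ring_nf

lemma Qpoly_le_Qpoly {α x : ℝ} (hα : 0 ≤ α) (hx : 0 ≤ x) {m n : ℕ} (hmn : m ≤ n) :
    Qpoly α m x ≤ Qpoly α n x :=
  sum_le_sum_of_subset_of_nonneg (range_subset_range.2 (by omega))
    fun j _ _ => mul_nonneg (Qcoeff_nonneg hα j) (pow_nonneg hx j)

lemma pow_mul_Qcoeff_le_Qpoly {α x : ℝ} (hα : 0 ≤ α) (hx₀ : 0 ≤ x) (hx₁ : x ≤ 1) (m : ℕ) :
    x ^ m * Qcoeff (α + 1) m ≤ Qpoly α m x := by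
  rw [← sum_range_succ_Qcoeff, mul_sum]
  refine sum_le_sum fun j hj => ?_
  rw [mul_comm]
  exact mul_le_mul_of_nonneg_left
    (pow_le_pow_of_le_one hx₀ hx₁ (Nat.lt_succ_iff.1 (mem_range.1 hj))) (Qcoeff_nonneg hα j)

lemma Qpoly_nonneg {α x : ℝ} (hα : 0 ≤ α) (hx : 0 ≤ x) (n : ℕ) : 0 ≤ Qpoly α n x :=
  sum_nonneg fun j _ => mul_nonneg (Qcoeff_nonneg hα j) (pow_nonneg hx j)

lemma continuous_Qpoly (α : ℝ) (n : ℕ) : Continuous (Qpoly α n) := by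
  unfold Qpoly; fun_prop

lemma inv_rpow_le_Qpoly {α x : ℝ} {n : ℕ} (hα : 0 ≤ α) (hx : 0 ≤ x) (hxn : 1 ≤ n * (1 - x)) :
    2⁻¹ * (2 * (1 + α) * (1 - x))⁻¹ ^ α ≤ Qpoly α n x := by
  have hy : 0 < 1 - x := by
    by_contra! h
    nlinarith [n.cast_nonneg (α := ℝ)]
  set m := ⌊(2 * (1 - x))⁻¹⌋₊
  have hm_le : (m : ℝ) ≤ (2 * (1 - x))⁻¹ := Nat.floor_le (by positivity)
  have hm_lt : (2 * (1 - x))⁻¹ < m + 1 := Nat.lt_floor_add_one _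
  have hmy : m * (1 - x) ≤ 2⁻¹ := calc
    m * (1 - x) ≤ (2 * (1 - x))⁻¹ * (1 - x) := by gcongr
    _ = 2⁻¹ := by field_simp
  have hmn : m ≤ n := by
    exact_mod_cast le_of_mul_le_mul_right (by linarith : m * (1 - x) ≤ n * (1 - x)) hy
  have hpow : 2⁻¹ ≤ x ^ m := by
    have bernoulli := one_add_mul_le_pow (a := -(1 - x)) (by linarith) m
    rw [show 1 + -(1 - x) = x by ring] at bernoulli
    linarith
  have hcoeff : (2 * (1 + α) * (1 - x))⁻¹ ^ α ≤ Qcoeff (α + 1) m := by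
    refine le_trans ?_ (rpow_le_Qcoeff_add_one hα m)
    gcongr
    calc (2 * (1 + α) * (1 - x))⁻¹ = (2 * (1 - x))⁻¹ / (1 + α) := by field_simp
      _ ≤ (m + 1 + α) / (1 + α) := by gcongr; linarith
  calc 2⁻¹ * (2 * (1 + α) * (1 - x))⁻¹ ^ α ≤ x ^ m * Qcoeff (α + 1) m := by gcongr
    _ ≤ Qpoly α m x := pow_mul_Qcoeff_le_Qpoly hα hx (by linarith) m
    _ ≤ Qpoly α n x := Qpoly_le_Qpoly hα hx hmn

lemma inv_one_sub_le_Qpoly_rpow {α x : ℝ} {n : ℕ} (hα : 0 < α) (hx : 0 ≤ x)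
    (hxn : 1 ≤ n * (1 - x)) :
    2⁻¹ ^ (1 / α) * (2 * (1 + α))⁻¹ * (1 - x)⁻¹ ≤ Qpoly α n x ^ (1 / α) := by
  have hy : 0 < 1 - x := by
    by_contra! h
    nlinarith [n.cast_nonneg (α := ℝ)]
  calc 2⁻¹ ^ (1 / α) * (2 * (1 + α))⁻¹ * (1 - x)⁻¹
      = (2⁻¹ * (2 * (1 + α) * (1 - x))⁻¹ ^ α) ^ (1 / α) := by
        rw [mul_rpow (by norm_num) (by positivity), ← rpow_mul (by positivity),
          mul_one_div_cancel hα.ne', rpow_one, mul_inv (2 * (1 + α)), mul_assoc]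
    _ ≤ Qpoly α n x ^ (1 / α) := by
        gcongr
        exact inv_rpow_le_Qpoly hα.le hx hxn

lemma integral_inv_one_sub {b : ℝ} (hb : b < 1) :
    ∫ x in (0 : ℝ)..b, (1 - x)⁻¹ = -log (1 - b) := by
  rw [intervalIntegral.integral_comp_sub_left (fun t => t⁻¹) 1,
    sub_zero, integral_inv_of_pos (by linarith) one_pos, one_div, log_inv]

/-- For every `α > 0`, `∫_0^1 Q_{n,α}(x)^(1/α) dx ≥ C(α) log n`. -/
theorem stmt13 (α : ℝ) (hα : 0 < α) :
    ∃ C : ℝ, 0 < C ∧ ∀ n : ℕ, 2 ≤ n →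
      C * Real.log n ≤ ∫ x in (0 : ℝ)..1, (Qpoly α n x) ^ (1 / α) := by
  refine ⟨2⁻¹ ^ (1 / α) * (2 * (1 + α))⁻¹, by positivity, fun n hn => ?_⟩
  set C := 2⁻¹ ^ (1 / α) * (2 * (1 + α))⁻¹
  have hn₁ : (1 : ℝ) < n := by exact_mod_cast hn
  have hb₀ : 0 ≤ 1 - (n : ℝ)⁻¹ := sub_nonneg.2 (inv_le_one_of_one_le₀ hn₁.le)
  have hb₁ : 1 - (n : ℝ)⁻¹ < 1 := sub_lt_self 1 (inv_pos.2 (by linarith))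
  have hf : Continuous fun x => Qpoly α n x ^ (1 / α) :=
    (continuous_Qpoly α n).rpow_const fun _ => Or.inr (by positivity)
  calc C * log n = ∫ x in (0 : ℝ)..1 - (n : ℝ)⁻¹, C * (1 - x)⁻¹ := by
        rw [intervalIntegral.integral_const_mul, integral_inv_one_sub hb₁, sub_sub_cancel, log_inv,
          neg_neg]
    _ ≤ ∫ x in (0 : ℝ)..1 - (n : ℝ)⁻¹, Qpoly α n x ^ (1 / α) := by
        refine intervalIntegral.integral_mono_on hb₀ ?_ (hf.intervalIntegrable _ _) fun x hx => ?_
        · refine (intervalIntegral.intervalIntegrable_inv (fun x hx => ?_)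
            (by fun_prop)).const_mul C
          rw [Set.uIcc_of_le hb₀] at hx
          linarith [hx.2]
        · refine inv_one_sub_le_Qpoly_rpow hα hx.1 ?_
          calc (1 : ℝ) = n * (n : ℝ)⁻¹ := (mul_inv_cancel₀ (by positivity)).symm
            _ ≤ n * (1 - x) := by gcongr; linarith [hx.2]
    _ ≤ ∫ x in (0 : ℝ)..1, Qpoly α n x ^ (1 / α) := by
        refine intervalIntegral.integral_mono_interval le_rfl hb₀ hb₁.le ?_
          (hf.intervalIntegrable _ _)
        exact ae_restrict_of_forall_mem measurableSet_Ioc fun x hx =>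
          rpow_nonneg (Qpoly_nonneg hα.le hx.1.le n) _
end

section
/- For every real number α > 1 there exists a constant C = C(α) > 0 such that for every positive integer n and every x ∈ [0, 1], one has Q_{n+1,α}(x)^{1/α} − Q_{n,α}(x)^{1/α} ≥ C · x^{n+1}. -/
open Polynomial MeasureTheory

/-!
Write `Q_{n+1} = Q_n + c_{n+1} x^{n+1}` with `c_j = (α)_j / j!`. Concavity of `t ↦ t^{1/α}`
bounds the increment of `Q^{1/α}` from below by `(1/α) c_{n+1} x^{n+1} Q_{n+1}^{1/α - 1}`, and
`Q_{n+1}(x) ≤ Q_{n+1}(1) = (α+1)_{n+1}/(n+1)!`. Bernoulli's inequality shows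
`(α+1)_m/m! ≥ ((m+1+α)/(α+1))^α`, which makes `c_m ((α+1)_m/m!)^{1/α-1}/α ≥ 1/(α+1)` for all `m`.
-/

open Finset

namespace Real

theorem mul_sub_mul_rpow_sub_one_le_rpow_sub_rpow {p A B : ℝ} (hp0 : 0 ≤ p) (hp1 : p ≤ 1)
    (hA : 0 ≤ A) (hB : 0 < B) :
    p * (B - A) * B ^ (p - 1) ≤ B ^ p - A ^ p := by
  have bernoulli : (A / B) ^ p ≤ 1 + p * (A / B - 1) := by
    simpa using rpow_one_add_le_one_add_mul_self (s := A / B - 1)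
      (by linarith [div_nonneg hA hB.le]) hp0 hp1
  have hA_eq : A ^ p = B ^ p * (A / B) ^ p := by
    rw [← mul_rpow hB.le (div_nonneg hA hB.le), mul_div_cancel₀ A hB.ne']
  have hB_eq : B ^ (p - 1) = B ^ p / B := by rw [rpow_sub hB, rpow_one]
  calc p * (B - A) * B ^ (p - 1) = B ^ p - B ^ p * (1 + p * (A / B - 1)) := by
        rw [hB_eq]; field_simp; ring
    _ ≤ B ^ p - A ^ p := by
        rw [hA_eq]; gcongr

theorem one_add_rpow_le_inv_one_sub_mul {α y : ℝ} (hα : 1 ≤ α) (hy : 0 ≤ y)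
    (hαy : α * y < 1) : (1 + y) ^ α ≤ (1 - α * y)⁻¹ := by
  have hy1 : y < 1 := by nlinarith
  have h_inv : 1 + y ≤ (1 - y)⁻¹ := by
    rw [le_inv_comm₀ (by linarith) (by linarith), inv_eq_one_div, le_div_iff₀ (by linarith)]
    nlinarith
  have bernoulli : 1 - α * y ≤ (1 - y) ^ α := by
    simpa [sub_eq_add_neg] using one_add_mul_self_le_rpow_one_add (s := -y) (by linarith) hα
  calc (1 + y) ^ α ≤ ((1 - y)⁻¹) ^ α := rpow_le_rpow (by linarith) h_inv (by linarith)
    _ = ((1 - y) ^ α)⁻¹ := inv_rpow (by linarith) α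
    _ ≤ (1 - α * y)⁻¹ := inv_anti₀ (by linarith) bernoulli

end Real

namespace Qpoly

noncomputable def coeff (α : ℝ) (j : ℕ) : ℝ :=
  (∏ i ∈ range j, (α + i)) / (j.factorial : ℝ)

theorem eq_sum_coeff (α : ℝ) (n : ℕ) (x : ℝ) :
    Qpoly α n x = ∑ j ∈ range (n + 1), coeff α j * x ^ j := rfl

@[simp]
theorem coeff_zero (α : ℝ) : coeff α 0 = 1 := by simp [coeff]

theorem coeff_pos {α : ℝ} (hα : 0 < α) (j : ℕ) : 0 < coeff α j :=
  div_pos (prod_pos fun i _ => by positivity) (by positivity)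

theorem coeff_nonneg {α : ℝ} (hα : 0 ≤ α) (j : ℕ) : 0 ≤ coeff α j :=
  div_nonneg (prod_nonneg fun i _ => by positivity) (by positivity)

theorem coeff_succ (α : ℝ) (n : ℕ) :
    coeff α (n + 1) = coeff α n * ((α + n) / (n + 1)) := by
  simp only [coeff, prod_range_succ, Nat.factorial_succ]
  push_cast
  field_simp

theorem coeff_mul_add (α : ℝ) (m : ℕ) : coeff α m * (α + m) = α * coeff (α + 1) m := by
  have shift : (∏ i ∈ range m, (α + i)) * (α + m) = α * ∏ i ∈ range m, (α + 1 + i) := by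
    rw [← prod_range_succ (fun i : ℕ => α + i), prod_range_succ']
    push_cast
    simp only [add_assoc, add_comm (1 : ℝ), add_zero, mul_comm]
  rw [coeff, coeff, div_mul_eq_mul_div, shift, mul_div_assoc]

theorem sum_coeff (α : ℝ) (n : ℕ) : ∑ j ∈ range (n + 1), coeff α j = coeff (α + 1) n := by
  induction n with
  | zero => simp
  | succ n ih =>
    have hstep : coeff α (n + 1) * (n + 1) = α * coeff (α + 1) n := by
      rw [← coeff_mul_add, coeff_succ]; field_simp
    rw [sum_range_succ, ih, coeff_succ (α + 1)]
    field_simp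
    linear_combination hstep

theorem succ (α : ℝ) (n : ℕ) (x : ℝ) :
    Qpoly α (n + 1) x = Qpoly α n x + coeff α (n + 1) * x ^ (n + 1) := by
  rw [eq_sum_coeff, eq_sum_coeff, sum_range_succ]

theorem one_le {α x : ℝ} (hα : 0 ≤ α) (hx : 0 ≤ x) (n : ℕ) : 1 ≤ Qpoly α n x := by
  rw [eq_sum_coeff]
  simpa using single_le_sum (f := fun j => coeff α j * x ^ j)
    (fun j _ => mul_nonneg (coeff_nonneg hα j) (pow_nonneg hx j)) (mem_range.2 n.succ_pos)

theorem le_coeff_add_one {α x : ℝ} (hα : 0 ≤ α) (hx : 0 ≤ x) (hx1 : x ≤ 1) (n : ℕ) :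
    Qpoly α n x ≤ coeff (α + 1) n := by
  rw [eq_sum_coeff, ← sum_coeff]
  exact sum_le_sum fun j _ =>
    mul_le_of_le_one_right (coeff_nonneg hα j) (pow_le_one₀ hx hx1)

theorem rpow_le_coeff_add_one {α : ℝ} (hα : 1 ≤ α) (n : ℕ) :
    (((n : ℝ) + 1 + α) / (α + 1)) ^ α ≤ coeff (α + 1) n := by
  induction n with
  | zero =>
    rw [Nat.cast_zero, zero_add, add_comm, div_self (by linarith), Real.one_rpow, coeff_zero]
  | succ n ih =>
    have hn : (0 : ℝ) < n + 1 := by positivity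
    have ratio : (1 + 1 / ((n : ℝ) + 1 + α)) ^ α ≤ (α + 1 + n) / (n + 1) := by
      convert Real.one_add_rpow_le_inv_one_sub_mul (y := 1 / ((n : ℝ) + 1 + α)) hα (by positivity)
        (by rw [mul_one_div, div_lt_one (by positivity)]; linarith) using 1
      field_simp
      ring
    calc ((((n + 1 : ℕ) : ℝ) + 1 + α) / (α + 1)) ^ α
        = (((n : ℝ) + 1 + α) / (α + 1)) ^ α * (1 + 1 / ((n : ℝ) + 1 + α)) ^ α := by
          rw [← Real.mul_rpow (by positivity) (by positivity)]
          congr 1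
          push_cast
          field_simp
          ring
      _ ≤ coeff (α + 1) n * ((α + 1 + n) / (n + 1)) :=
          mul_le_mul ih ratio (by positivity) (coeff_nonneg (by linarith) n)
      _ = coeff (α + 1) (n + 1) := (coeff_succ (α + 1) n).symm

theorem inv_add_one_le_coeff_mul_rpow {α : ℝ} (hα : 1 ≤ α) (m : ℕ) :
    1 / (α + 1) ≤ coeff α m / α * coeff (α + 1) m ^ (1 / α - 1) := by
  have hα0 : 0 < α := by linarith
  set b := coeff (α + 1) m
  have hb : 0 < b := coeff_pos (by linarith) m
  have hb_root : ((m : ℝ) + 1 + α) / (α + 1) ≤ b ^ (1 / α) := by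
    calc ((m : ℝ) + 1 + α) / (α + 1) = ((((m : ℝ) + 1 + α) / (α + 1)) ^ α) ^ (1 / α) := by
          rw [← Real.rpow_mul (by positivity), mul_one_div_cancel hα0.ne', Real.rpow_one]
      _ ≤ b ^ (1 / α) := Real.rpow_le_rpow (by positivity) (rpow_le_coeff_add_one hα m)
          (by positivity)
  have hcoeff : coeff α m / α = b / (α + m) := by
    rw [div_eq_div_iff hα0.ne' (by positivity), coeff_mul_add, mul_comm]
  calc 1 / (α + 1) ≤ ((m : ℝ) + 1 + α) / (α + 1) / (α + m) := by
        rw [div_div, div_le_div_iff₀ (by positivity) (by positivity)]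
        nlinarith
    _ ≤ b ^ (1 / α) / (α + m) := by gcongr
    _ = coeff α m / α * b ^ (1 / α - 1) := by
        rw [hcoeff, Real.rpow_sub hb, Real.rpow_one]
        field_simp

end Qpoly

/-- For `α > 1`, `Q_{n+1,α}(x)^(1/α) - Q_{n,α}(x)^(1/α) ≥ C(α) x^(n+1)` on `[0,1]`. -/
theorem stmt14 (α : ℝ) (hα : 1 < α) :
    ∃ C : ℝ, 0 < C ∧ ∀ n : ℕ, 0 < n → ∀ x ∈ Set.Icc (0 : ℝ) 1,
      C * x ^ (n + 1) ≤ (Qpoly α (n + 1) x) ^ (1 / α) - (Qpoly α n x) ^ (1 / α) := by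
  have hα0 : 0 < α := by linarith
  refine ⟨1 / (α + 1), by positivity, fun n _ x ⟨hx0, hx1⟩ => ?_⟩
  have hBA : Qpoly α (n + 1) x - Qpoly α n x = Qpoly.coeff α (n + 1) * x ^ (n + 1) := by
    rw [Qpoly.succ, add_sub_cancel_left]
  set A := Qpoly α n x
  set B := Qpoly α (n + 1) x
  have hA : 0 ≤ A := zero_le_one.trans (Qpoly.one_le hα0.le hx0 n)
  have hB : 0 < B := zero_lt_one.trans_le (Qpoly.one_le hα0.le hx0 (n + 1))
  calc 1 / (α + 1) * x ^ (n + 1)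
      ≤ Qpoly.coeff α (n + 1) / α * Qpoly.coeff (α + 1) (n + 1) ^ (1 / α - 1) * x ^ (n + 1) := by
        gcongr
        exact Qpoly.inv_add_one_le_coeff_mul_rpow hα.le (n + 1)
    _ ≤ Qpoly.coeff α (n + 1) / α * B ^ (1 / α - 1) * x ^ (n + 1) := by
        have hexp : 1 / α - 1 ≤ 0 := by rw [sub_nonpos, div_le_one hα0]; exact hα.le
        have hcoeff : 0 ≤ Qpoly.coeff α (n + 1) / α :=
          div_nonneg (Qpoly.coeff_nonneg hα0.le _) hα0.le
        gcongr ?_ * _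
        exact mul_le_mul_of_nonneg_left (Real.rpow_le_rpow_of_nonpos hB
          (Qpoly.le_coeff_add_one hα0.le hx0 hx1 _) hexp) hcoeff
    _ = 1 / α * (B - A) * B ^ (1 / α - 1) := by rw [hBA]; ring
    _ ≤ B ^ (1 / α) - A ^ (1 / α) :=
        Real.mul_sub_mul_rpow_sub_one_le_rpow_sub_rpow (by positivity)
          (by rw [div_le_one hα0]; exact hα.le) hA hB
end
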